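/- arXiv:2406.02742 — 11 statements merged into one kernel-verified Lean document; each statement's English description precedes it below -/
import Mathlib

section
/- Let m be a positive integer and let A and B be real symmetric positive semidefinite m×m matrices such that A − B is positive semidefinite. If the largest eigenvalue of B is at most one fifth of the largest eigenvalue of A, then tr(B) ≤ (1 − 4/(5m)) · tr(A). -/
open Matrix

section aux

variable {m : ℕ}

lemma my_trace_eq_sum_eigs {M : Matrix (Fin m) (Fin m) ℝ} (hM : M.IsHermitian) :
    M.trace = ∑ i, hM.eigenvalues i := by
  conv_lhs => rw [hM.spectral_theorem, Unitary.conjStarAlgAut_apply]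
  rw [Matrix.trace_mul_cycle,
    (Matrix.mem_unitaryGroup_iff').mp (hM.eigenvectorUnitary).2, Matrix.one_mul,
    Matrix.trace_diagonal]
  simp

lemma my_quad_eq {M : Matrix (Fin m) (Fin m) ℝ} (hM : M.IsHermitian) (x : Fin m → ℝ) :
    x ⬝ᵥ (M *ᵥ x) = ∑ i, hM.eigenvalues i * ((star (hM.eigenvectorUnitary : Matrix (Fin m) (Fin m) ℝ) *ᵥ x) i)^2 := by
  set U : Matrix (Fin m) (Fin m) ℝ := (hM.eigenvectorUnitary : Matrix (Fin m) (Fin m) ℝ) with hUdef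
  have hvm : x ᵥ* U = star U *ᵥ x := by
    rw [Matrix.star_eq_conjTranspose, Matrix.conjTranspose_eq_transpose_of_trivial,
      Matrix.mulVec_transpose]
  conv_lhs => rw [hM.spectral_theorem, Unitary.conjStarAlgAut_apply]
  rw [← Matrix.mulVec_mulVec, Matrix.dotProduct_mulVec, ← Matrix.vecMul_vecMul, hvm]
  simp only [Matrix.vecMul_diagonal, dotProduct, Function.comp_apply, RCLike.ofReal_real_eq_id, id_eq]
  exact Finset.sum_congr rfl (fun i _ => by ring)

lemma my_norm_eq {M : Matrix (Fin m) (Fin m) ℝ} (hM : M.IsHermitian) (x : Fin m → ℝ) :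
    (star (hM.eigenvectorUnitary : Matrix (Fin m) (Fin m) ℝ) *ᵥ x) ⬝ᵥ
      (star (hM.eigenvectorUnitary : Matrix (Fin m) (Fin m) ℝ) *ᵥ x) = x ⬝ᵥ x := by
  set U : Matrix (Fin m) (Fin m) ℝ := (hM.eigenvectorUnitary : Matrix (Fin m) (Fin m) ℝ) with hUdef
  set y : Fin m → ℝ := star U *ᵥ x with hy
  have hvm : x ᵥ* U = star U *ᵥ x := by
    rw [Matrix.star_eq_conjTranspose, Matrix.conjTranspose_eq_transpose_of_trivial,
      Matrix.mulVec_transpose]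
  calc y ⬝ᵥ y = (x ᵥ* U) ⬝ᵥ y := by rw [hvm]
    _ = x ⬝ᵥ (U *ᵥ y) := (Matrix.dotProduct_mulVec x U y).symm
    _ = x ⬝ᵥ ((U * star U) *ᵥ x) := by rw [Matrix.mulVec_mulVec]
    _ = x ⬝ᵥ x := by
        rw [(Matrix.mem_unitaryGroup_iff).mp (hM.eigenvectorUnitary).2, Matrix.one_mulVec]

lemma my_quad_le_sup [Nonempty (Fin m)] {M : Matrix (Fin m) (Fin m) ℝ} (hM : M.IsHermitian)
    (x : Fin m → ℝ) :
    x ⬝ᵥ (M *ᵥ x) ≤ (⨆ i, hM.eigenvalues i) * (x ⬝ᵥ x) := by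
  rw [my_quad_eq hM x, ← my_norm_eq hM x]
  set y : Fin m → ℝ := star (hM.eigenvectorUnitary : Matrix (Fin m) (Fin m) ℝ) *ᵥ x with hy
  have h2 : y ⬝ᵥ y = ∑ i, (y i)^2 := by simp [dotProduct, sq]
  rw [h2, Finset.mul_sum]
  exact Finset.sum_le_sum fun i _ =>
    mul_le_mul_of_nonneg_right
      (le_ciSup (Set.Finite.bddAbove (Set.finite_range _)) i) (sq_nonneg _)

end aux

theorem stmt2 (m : ℕ) (hm : 0 < m) (A B : Matrix (Fin m) (Fin m) ℝ)
    (hA : A.PosSemidef) (hB : B.PosSemidef) (hAB : (A - B).PosSemidef)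
    (hev : (⨆ i, hB.1.eigenvalues i) ≤ (⨆ i, hA.1.eigenvalues i) / 5) :
    B.trace ≤ (1 - 4 / (5 * (m : ℝ))) * A.trace := by
  haveI : Nonempty (Fin m) := Fin.pos_iff_nonempty.mp hm
  set a := ⨆ i, hA.1.eigenvalues i with hadef
  set b := ⨆ i, hB.1.eigenvalues i with hbdef
  set c := ⨆ i, hAB.1.eigenvalues i with hcdef
  obtain ⟨i0, hi0⟩ := exists_eq_ciSup_of_finite (f := hA.1.eigenvalues)
  set v : Fin m → ℝ := (WithLp.equiv 2 (Fin m → ℝ)) (hA.1.eigenvectorBasis i0) with hvdef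
  have hva : a = v ⬝ᵥ (A *ᵥ v) := by
    rw [hadef, ← hi0, hA.1.eigenvalues_eq i0]
    simp [hvdef]
  have hvv : v ⬝ᵥ v = 1 := by
    have hnorm : ‖hA.1.eigenvectorBasis i0‖ = 1 := hA.1.eigenvectorBasis.orthonormal.1 i0
    have : (v ⬝ᵥ v) = @inner ℝ _ _ (hA.1.eigenvectorBasis i0) (hA.1.eigenvectorBasis i0) := by
      rw [PiLp.inner_apply]
      simp [hvdef, dotProduct, sq]
    rw [this, real_inner_self_eq_norm_sq, hnorm]
    norm_num
  have h1 : v ⬝ᵥ (B *ᵥ v) ≤ b := by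
    have := my_quad_le_sup hB.1 v
    rwa [hvv, mul_one] at this
  have h2 : v ⬝ᵥ ((A - B) *ᵥ v) ≤ c := by
    have := my_quad_le_sup hAB.1 v
    rwa [hvv, mul_one] at this
  have hsplit : v ⬝ᵥ (A *ᵥ v) = v ⬝ᵥ ((A - B) *ᵥ v) + v ⬝ᵥ (B *ᵥ v) := by
    rw [Matrix.sub_mulVec, dotProduct_sub]
    ring
  have hc_le : c ≤ (A - B).trace := by
    obtain ⟨j, hj⟩ := exists_eq_ciSup_of_finite (f := hAB.1.eigenvalues)
    rw [hcdef, ← hj, my_trace_eq_sum_eigs hAB.1]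
    exact Finset.single_le_sum (fun i _ => hAB.eigenvalues_nonneg i) (Finset.mem_univ j)
  have htrA : A.trace ≤ m * a := by
    rw [my_trace_eq_sum_eigs hA.1]
    calc ∑ i, hA.1.eigenvalues i ≤ ∑ _i : Fin m, a :=
          Finset.sum_le_sum fun i _ =>
            le_ciSup (Set.Finite.bddAbove (Set.finite_range _)) i
      _ = m * a := by simp [Finset.sum_const, nsmul_eq_mul]
  have ha0 : 0 ≤ a := by rw [hadef, ← hi0]; exact hA.eigenvalues_nonneg i0
  have htr : (A - B).trace = A.trace - B.trace := Matrix.trace_sub A B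
  have key : (4 / 5) * a ≤ A.trace - B.trace := by
    rw [← htr]
    linarith
  have hm' : (1 : ℝ) ≤ (m : ℝ) := by exact_mod_cast hm
  have h5m : (0 : ℝ) < 5 * (m : ℝ) := by positivity
  have expand : (1 - 4 / (5 * (m : ℝ))) * A.trace = A.trace - 4 * A.trace / (5 * (m : ℝ)) := by
    field_simp
  rw [expand]
  have hdiv : 4 * A.trace / (5 * (m : ℝ)) ≤ A.trace - B.trace := by
    rw [div_le_iff₀ h5m]
    nlinarith [key, htrA, ha0, hm']
  linarith
end

section
/- Let D be a probability measure on ℝ^d, let p be a polynomial in d real variables with ∫ p² dD ≤ 1, let α ∈ (0,1), B₀ > 0, N a positive integer, and let S be a finite multiset of points of ℝ^d with |S| ≤ N. Let τ* ≥ 0 be such that for every τ with 0 ≤ τ < τ*, |{x ∈ S : p(x)² > τ}| ≤ (10N/α) · D({x : B₀ ≥ p(x)² > τ}). Let S' be the sub-multiset of those x ∈ S with p(x)² ≤ τ*. Then (1/N) · Σ_{x ∈ S'} p(x)² ≤ (10/α) · ∫ p(x)² · 1{p(x)² ≤ B₀} dD(x); in particular (1/N) · Σ_{x ∈ S'} p(x)²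 ≤ 10/α. -/
open MeasureTheory MvPolynomial
open scoped Classical

private lemma sum_indicator_eq_card {β : Type*} (s : Multiset β) (Q : β → Prop)
    [DecidablePred Q] :
    (s.map (fun x => if Q x then (1:ℝ) else 0)).sum = ((s.filter Q).card : ℝ) := by
  induction s using Multiset.induction with
  | empty => simp
  | cons a s ih =>
    by_cases h : Q a <;> simp [Multiset.filter_cons, h, ih, add_comm]

private lemma multiset_integral_sum {β : Type*} (A : Set ℝ) (s : Multiset β)
    (F : β → ℝ → ℝ) (h : ∀ x ∈ s, IntegrableOn (F x) A volume) :
    (s.map (fun x => ∫ t in A, F x t)).sum = (∫ t in A, (s.map (fun x => F x t)).sum) ∧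
      IntegrableOn (fun t => (s.map (fun x => F x t)).sum) A volume := by
  induction s using Multiset.induction with
  | empty => simp [integrableOn_const]
  | cons a s ih =>
    have ha := h a (Multiset.mem_cons_self a s)
    obtain ⟨ih1, ih2⟩ := ih (fun x hx => h x (Multiset.mem_cons_of_mem hx))
    constructor
    · simp only [Multiset.map_cons, Multiset.sum_cons, ih1]
      rw [← integral_add ha ih2]
    · simp only [Multiset.map_cons, Multiset.sum_cons]; exact ha.add ih2

private lemma point_integral (c τ : ℝ) (hc0 : 0 ≤ c) (hcτ : c ≤ τ) :
    (∫ t in Set.Ioo 0 τ, (if t < c then (1:ℝ) else 0)) = c := by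
  have h1 : (fun t => if t < c then (1:ℝ) else 0)
      = (Set.Iio c).indicator (fun _ => (1:ℝ)) := by
    funext t; simp [Set.indicator_apply]
  have h2 : Set.Ioo 0 τ ∩ Set.Iio c = Set.Ioo 0 c := by
    ext t
    simp only [Set.mem_inter_iff, Set.mem_Ioo, Set.mem_Iio]
    constructor
    · rintro ⟨⟨ht0, _⟩, htc⟩; exact ⟨ht0, htc⟩
    · rintro ⟨ht0, htc⟩; exact ⟨⟨ht0, lt_of_lt_of_le htc hcτ⟩, htc⟩
  rw [h1, setIntegral_indicator measurableSet_Iio, h2, setIntegral_const, smul_eq_mul,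
    mul_one, measureReal_def, Real.volume_Ioo, ENNReal.toReal_ofReal (by linarith)]
  ring

theorem stmt3 (d : ℕ) (D : Measure (Fin d → ℝ)) [IsProbabilityMeasure D]
    (p : MvPolynomial (Fin d) ℝ)
    (hp2int : Integrable (fun x => (eval x p) ^ 2) D)
    (hpnorm : (∫ x, (eval x p) ^ 2 ∂D) ≤ 1)
    (α : ℝ) (hα0 : 0 < α) (hα1 : α < 1) (B₀ : ℝ) (hB₀ : 0 < B₀)
    (N : ℕ) (hN : 0 < N)
    (S : Multiset (Fin d → ℝ)) (hcard : Multiset.card S ≤ N)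
    (τstar : ℝ) (hτstar : 0 ≤ τstar)
    (hthr : ∀ τ : ℝ, 0 ≤ τ → τ < τstar →
      ((Multiset.card (S.filter (fun x => τ < (eval x p) ^ 2)) : ℝ)) ≤
        (10 * N / α) * (D {x | τ < (eval x p) ^ 2 ∧ (eval x p) ^ 2 ≤ B₀}).toReal) :
    ((S.filter (fun x => (eval x p) ^ 2 ≤ τstar)).map (fun x => (eval x p) ^ 2)).sum / (N : ℝ) ≤
        (10 / α) * ∫ x in {x | (eval x p) ^ 2 ≤ B₀}, (eval x p) ^ 2 ∂D ∧
      ((S.filter (fun x => (eval x p) ^ 2 ≤ τstar)).map (fun x => (eval x p) ^ 2)).sum / (N : ℝ) ≤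
        10 / α := by
  set f : (Fin d → ℝ) → ℝ := fun x => (eval x p) ^ 2 with hfdef
  have hf0 : ∀ x, 0 ≤ f x := fun x => sq_nonneg _
  have hfmeas : Measurable f := ((MvPolynomial.continuous_eval p).pow 2).measurable
  have hBset : MeasurableSet {x | f x ≤ B₀} := measurableSet_le hfmeas measurable_const
  set g : (Fin d → ℝ) → ℝ := Set.indicator {x | f x ≤ B₀} f with hgdef
  have hgint : Integrable g D := hp2int.indicator hBset
  have hg0 : ∀ x, 0 ≤ g x := fun x => Set.indicator_nonneg (fun y _ => hf0 y) x
  -- I0 is the truncated second moment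
  set I0 : ℝ := ∫ x in {x | f x ≤ B₀}, f x ∂D with hI0def
  have hI0g : I0 = ∫ x, g x ∂D := (integral_indicator hBset).symm
  have hI0le1 : I0 ≤ 1 := by
    rw [hI0g]
    refine le_trans (integral_mono hgint hp2int ?_) hpnorm
    exact fun x => Set.indicator_le_self' (fun y _ => hf0 y) x
  have hI0nonneg : 0 ≤ I0 := by
    rw [hI0g]; exact integral_nonneg hg0
  -- layer cake for g
  have hlc : ∫ x, g x ∂D = ∫ t in Set.Ioi (0:ℝ), (D {a | t < g a}).toReal :=
    hgint.integral_eq_integral_meas_lt (Filter.Eventually.of_forall hg0)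
  set h : ℝ → ℝ := fun t => (D {a | t < f a ∧ f a ≤ B₀}).toReal with hhdef
  have hseteq : ∀ t : ℝ, 0 < t → {a | t < g a} = {a | t < f a ∧ f a ≤ B₀} := by
    intro t ht
    ext a
    simp only [Set.mem_setOf_eq, hgdef, Set.indicator_apply]
    by_cases hb : f a ≤ B₀
    · simp [hb]
    · simp [hb]
      exact ht.le
  have hIoi : ∫ t in Set.Ioi (0:ℝ), h t = ∫ x, g x ∂D := by
    rw [hlc]
    refine setIntegral_congr_fun measurableSet_Ioi (fun t ht => ?_)
    rw [hhdef]; rw [hseteq t ht]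
  -- integrability of h on Ioi 0
  have hanti : Antitone (fun t : ℝ => D {a | t < f a ∧ f a ≤ B₀}) := by
    intro s t hst
    exact measure_mono (fun a ha => ⟨lt_of_le_of_lt hst ha.1, ha.2⟩)
  have hhmeas : Measurable h := Measurable.ennreal_toReal hanti.measurable
  have hhnonneg : ∀ t, 0 ≤ h t := fun t => ENNReal.toReal_nonneg
  have hhint : IntegrableOn h (Set.Ioi (0:ℝ)) volume := by
    refine ⟨hhmeas.aestronglyMeasurable, ?_⟩
    rw [hasFiniteIntegral_iff_ofReal (Filter.Eventually.of_forall hhnonneg)]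
    have e1 : ∀ t : ℝ, ENNReal.ofReal (h t) = D {a | t < f a ∧ f a ≤ B₀} := by
      intro t; rw [hhdef]
      exact ENNReal.ofReal_toReal (measure_ne_top D _)
    calc ∫⁻ t in Set.Ioi (0:ℝ), ENNReal.ofReal (h t)
        = ∫⁻ t in Set.Ioi (0:ℝ), D {a | t < g a} := by
          refine setLIntegral_congr_fun measurableSet_Ioi
            (fun t ht => ?_)
          rw [e1 t, hseteq t ht]
      _ = ∫⁻ a, ENNReal.ofReal (g a) ∂D :=
          (lintegral_eq_lintegral_meas_lt D (Filter.Eventually.of_forall hg0)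
            hgint.aemeasurable).symm
      _ < ⊤ := hgint.lintegral_lt_top
  -- the filtered multiset
  set S' : Multiset (Fin d → ℝ) := S.filter (fun x => f x ≤ τstar) with hS'def
  set F : (Fin d → ℝ) → ℝ → ℝ := fun x t => if t < f x then (1:ℝ) else 0 with hFdef
  have hFint : ∀ x ∈ S', IntegrableOn (F x) (Set.Ioo 0 τstar) volume := by
    intro x _
    have : F x = (Set.Iio (f x)).indicator (fun _ => (1:ℝ)) := by
      funext t; simp [hFdef, Set.indicator_apply]
    rw [this]
    exact (integrableOn_const measure_Ioo_lt_top.ne).indicator measurableSet_Iio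
  obtain ⟨hswap, hcint⟩ := multiset_integral_sum (Set.Ioo 0 τstar) S' F hFint
  -- step 1: per-point layer cake
  have step1 : (S'.map f).sum = (S'.map (fun x => ∫ t in Set.Ioo 0 τstar, F x t)).sum := by
    refine congrArg Multiset.sum (Multiset.map_congr rfl (fun x hx => ?_))
    have hxτ : f x ≤ τstar := (Multiset.mem_filter.mp hx).2
    exact (point_integral (f x) τstar (hf0 x) hxτ).symm
  -- pointwise count bound
  have hptwise : ∀ t ∈ Set.Ioo (0:ℝ) τstar,
      (S'.map (fun x => F x t)).sum ≤ (10 * N / α) * h t := by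
    intro t ht
    have e1 : (S'.map (fun x => F x t)).sum
        = ((S'.filter (fun x => t < f x)).card : ℝ) :=
      sum_indicator_eq_card S' (fun x => t < f x)
    have e2 : ((S'.filter (fun x => t < f x)).card : ℝ)
        ≤ ((S.filter (fun x => t < f x)).card : ℝ) := by
      exact_mod_cast Multiset.card_le_card
        (Multiset.filter_le_filter _ (Multiset.filter_le _ S))
    have e3 := hthr t ht.1.le ht.2
    rw [e1]
    exact le_trans e2 e3
  -- integrability of RHS bound on Ioo
  have hhintIoo : IntegrableOn (fun t => (10 * N / α) * h t) (Set.Ioo 0 τstar) volume :=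
    (hhint.mono_set Set.Ioo_subset_Ioi_self).const_mul _
  have step3 : (∫ t in Set.Ioo (0:ℝ) τstar, (S'.map (fun x => F x t)).sum)
      ≤ ∫ t in Set.Ioo (0:ℝ) τstar, (10 * N / α) * h t :=
    setIntegral_mono_on hcint hhintIoo measurableSet_Ioo hptwise
  have step4 : (∫ t in Set.Ioo (0:ℝ) τstar, (10 * N / α) * h t)
      = (10 * N / α) * ∫ t in Set.Ioo (0:ℝ) τstar, h t := integral_const_mul _ _
  have step5 : (∫ t in Set.Ioo (0:ℝ) τstar, h t) ≤ ∫ t in Set.Ioi (0:ℝ), h t :=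
    setIntegral_mono_set hhint (Filter.Eventually.of_forall hhnonneg)
      (HasSubset.Subset.eventuallyLE Set.Ioo_subset_Ioi_self)
  have hcoef : (0:ℝ) ≤ 10 * N / α := by positivity
  have total : (S'.map f).sum ≤ (10 * N / α) * I0 := by
    calc (S'.map f).sum = ∫ t in Set.Ioo (0:ℝ) τstar, (S'.map (fun x => F x t)).sum := by
          rw [step1, hswap]
      _ ≤ (10 * N / α) * ∫ t in Set.Ioo (0:ℝ) τstar, h t := by rw [← step4]; exact step3
      _ ≤ (10 * N / α) * ∫ t in Set.Ioi (0:ℝ), h t := by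
          exact mul_le_mul_of_nonneg_left step5 hcoef
      _ = (10 * N / α) * I0 := by rw [hIoi, ← hI0g]
  have hNpos : (0:ℝ) < N := Nat.cast_pos.mpr hN
  have main : (S'.map f).sum / (N : ℝ) ≤ (10 / α) * I0 := by
    rw [div_le_iff₀ hNpos]
    calc (S'.map f).sum ≤ (10 * N / α) * I0 := total
      _ = 10 / α * I0 * N := by field_simp
  refine ⟨main, le_trans main ?_⟩
  calc (10 / α) * I0 ≤ (10 / α) * 1 := by
        exact mul_le_mul_of_nonneg_left hI0le1 (by positivity)
    _ = 10 / α := mul_one _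
end

section
/- Let d, k be positive integers and let μ be a probability measure on ℝ^d such that every polynomial in d real variables of degree at most k is square-integrable with respect to μ. Let m = C(d+k, k) be the dimension of the space of polynomials in d real variables of degree at most k. Then for every ε ∈ (0,1), μ({x ∈ ℝ^d : there exists a polynomial p in d real variables of degree at most k with ∫ p² dμ ≤ 1 and p(x)² > 2m³/ε}) ≤ ε/2. -/
open MeasureTheory MvPolynomial RealInnerProductSpace

lemma finrank_restrictTotalDegree_le (d k : ℕ) :
    Module.finrank ℝ (restrictTotalDegree (Fin d) ℝ k) ≤ (d + k).choose k := by
  classical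
  set S : Set (Fin d →₀ ℕ) := { n | (n.sum fun _ e => e) ≤ k } with hS
  -- injection into Sym (Fin (d+1)) k
  have hcard : ∀ s : S, Multiset.card
      ((s.1.toMultiset.map Fin.castSucc) +
        Multiset.replicate (k - s.1.sum fun _ e => e) (Fin.last d)) = k := by
    intro s
    have hs : (s.1.sum fun _ e => e) ≤ k := s.2
    simp [Finsupp.card_toMultiset]
    have : (s.1.sum fun _ e => e) = (s.1.sum fun _ => id) := rfl
    omega
  let f : S → Sym (Fin (d + 1)) k := fun s =>
    ⟨(s.1.toMultiset.map Fin.castSucc) +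
        Multiset.replicate (k - s.1.sum fun _ e => e) (Fin.last d), hcard s⟩
  have hf : Function.Injective f := by
    intro s t hst
    have h := congrArg (fun u : Sym (Fin (d+1)) k => (u : Multiset (Fin (d+1)))) hst
    ext i
    have h2 := congrArg (Multiset.count (Fin.castSucc i)) h
    have hne : (Fin.castSucc i : Fin (d+1)) ≠ Fin.last d := (Fin.castSucc_lt_last i).ne
    simpa [f, Multiset.count_add, Multiset.count_replicate, hne, hne.symm,
      Multiset.count_map_eq_count' _ _ (Fin.castSucc_injective d),
      Finsupp.count_toMultiset] using h2
  have : Finite S := Finite.of_injective f hf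
  have : Fintype S := Fintype.ofFinite S
  have hrank : Module.finrank ℝ (restrictTotalDegree (Fin d) ℝ k) = Fintype.card S :=
    Module.finrank_eq_card_basis (basisRestrictSupport ℝ S)
  rw [hrank]
  calc Fintype.card S ≤ Fintype.card (Sym (Fin (d+1)) k) := Fintype.card_le_of_injective f hf
    _ = (d + k).choose k := by
        rw [Sym.card_sym_eq_choose]
        simp

set_option maxHeartbeats 1000000 in
set_option synthInstance.maxHeartbeats 400000 in
theorem stmt4 (d k : ℕ) (hd : 0 < d) (hk : 0 < k)
    (μ : Measure (Fin d → ℝ)) [IsProbabilityMeasure μ]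
    (hInt : ∀ p : MvPolynomial (Fin d) ℝ, p.totalDegree ≤ k →
      Integrable (fun x => (eval x p) ^ 2) μ)
    (m : ℕ) (hm : m = (d + k).choose k)
    (ε : ℝ) (hε0 : 0 < ε) (hε1 : ε < 1) :
    (μ {x | ∃ p : MvPolynomial (Fin d) ℝ, p.totalDegree ≤ k ∧
        (∫ y, (eval y p) ^ 2 ∂μ) ≤ 1 ∧ 2 * (m : ℝ) ^ 3 / ε < (eval x p) ^ 2}).toReal
      ≤ ε / 2 := by
  classical
  set V := restrictTotalDegree (Fin d) ℝ k with hV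
  have hmem : ∀ p : MvPolynomial (Fin d) ℝ, p.totalDegree ≤ k →
      MemLp (fun x => eval x p) 2 μ := fun p hp =>
    (memLp_two_iff_integrable_sq (p.continuous_eval).aestronglyMeasurable).mpr (hInt p hp)
  have mp : ∀ p : V, MemLp (fun x => eval x (p : MvPolynomial (Fin d) ℝ)) 2 μ :=
    fun p => hmem p ((mem_restrictTotalDegree _ _ _).mp p.2)
  let T : V →ₗ[ℝ] Lp ℝ 2 μ :=
    { toFun := fun p => (mp p).toLp _
      map_add' := fun p q => by
        refine (MemLp.toLp_congr _ ((mp p).add (mp q)) ?_).trans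
          (MemLp.toLp_add (mp p) (mp q))
        filter_upwards with x; simp
      map_smul' := fun c p => by
        simp only [RingHom.id_apply]
        refine (MemLp.toLp_congr (mp (c • p)) ((mp p).const_smul c) ?_).trans
          (MemLp.toLp_const_smul c (mp p))
        filter_upwards with x; simp [smul_eval] }
  have hT : ∀ p : V, (T p : (Fin d → ℝ) → ℝ) =ᵐ[μ] fun x => eval x (p : MvPolynomial (Fin d) ℝ) :=
    fun p => MemLp.coeFn_toLp (mp p)
  have hTinner : ∀ p q : V, (inner ℝ (T p) (T q) : ℝ) =
      ∫ x, eval x (p : MvPolynomial (Fin d) ℝ) * eval x (q : MvPolynomial (Fin d) ℝ) ∂μ := by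
    intro p q
    rw [L2.inner_def]
    apply integral_congr_ae
    filter_upwards [hT p, hT q] with x hx hy
    simp [hx, hy, mul_comm]
  -- the range of T
  have : FiniteDimensional ℝ V := by
    rw [hV]; infer_instance
  set E := LinearMap.range T with hE
  have hEfd : FiniteDimensional ℝ E := inferInstance
  set n := Module.finrank ℝ E with hn
  let b : OrthonormalBasis (Fin n) ℝ E := stdOrthonormalBasis ℝ E
  -- preimages of the basis
  have hq : ∀ i : Fin n, ∃ p : V, T p = (b i : Lp ℝ 2 μ) := fun i =>
    LinearMap.mem_range.mp (b i).2
  choose q hq using hq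
  -- the Christoffel-type function
  set K : (Fin d → ℝ) → ℝ := fun x => ∑ i : Fin n, (eval x (q i : MvPolynomial (Fin d) ℝ)) ^ 2
    with hK
  have hdeg : ∀ p : V, (p : MvPolynomial (Fin d) ℝ).totalDegree ≤ k :=
    fun p => (mem_restrictTotalDegree _ _ _).mp p.2
  have hKint : Integrable K μ := integrable_finset_sum _ fun i _ => hInt _ (hdeg (q i))
  have hKval : ∫ x, K x ∂μ = n := by
    rw [hK]
    rw [integral_finset_sum _ fun i _ => hInt _ (hdeg (q i))]
    have : ∀ i : Fin n, ∫ x, (eval x (q i : MvPolynomial (Fin d) ℝ)) ^ 2 ∂μ = 1 := by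
      intro i
      have h1 : (inner ℝ (T (q i)) (T (q i)) : ℝ) = ∫ x, eval x (q i : MvPolynomial (Fin d) ℝ)
          * eval x (q i : MvPolynomial (Fin d) ℝ) ∂μ := hTinner _ _
      rw [hq i] at h1
      have h2 : (inner ℝ ((b i : E) : Lp ℝ 2 μ) ((b i : E) : Lp ℝ 2 μ) : ℝ)
          = (inner ℝ (b i) (b i) : ℝ) := rfl
      have h3 : (inner ℝ (b i) (b i) : ℝ) = 1 := by
        rw [real_inner_self_eq_norm_sq, b.orthonormal.1 i, one_pow]
      rw [h2, h3] at h1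
      have h4 : ∫ x, (eval x (q i : MvPolynomial (Fin d) ℝ)) ^ 2 ∂μ
          = ∫ x, eval x (q i : MvPolynomial (Fin d) ℝ) * eval x (q i : MvPolynomial (Fin d) ℝ) ∂μ := by
        congr 1; funext x; ring
      rw [h4, ← h1]
    simp [this]
  -- the null set coming from the kernel of T
  have hKerfd : FiniteDimensional ℝ (LinearMap.ker T) := inferInstance
  have hfree : Module.Free ℝ ↥(LinearMap.ker T) := by
    exact Module.Free.of_divisionRing ℝ ↥(LinearMap.ker T)
  let rb := Module.finBasis ℝ (LinearMap.ker T)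
  set N : Set (Fin d → ℝ) :=
    ⋃ l, {x | eval x ((rb l : V) : MvPolynomial (Fin d) ℝ) ≠ 0} with hN
  have hNnull : μ N = 0 := by
    refine measure_iUnion_null fun l => ?_
    have h0 : T (rb l : V) = 0 := (rb l).2
    have hae : (fun x => eval x ((rb l : V) : MvPolynomial (Fin d) ℝ)) =ᵐ[μ] 0 := by
      have h1 : (T (rb l : V) : (Fin d → ℝ) → ℝ) =ᵐ[μ] 0 := Lp.eq_zero_iff_ae_eq_zero.mp h0
      exact (hT (rb l : V)).symm.trans h1
    have : {x | eval x ((rb l : V) : MvPolynomial (Fin d) ℝ) ≠ 0}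
        = {x | ¬ (fun x => eval x ((rb l : V) : MvPolynomial (Fin d) ℝ)) x = (0 : (Fin d → ℝ) → ℝ) x} := rfl
    rw [this, ← ae_iff]
    exact hae
  have hker : ∀ s : V, s ∈ LinearMap.ker T → ∀ x, x ∉ N →
      eval x (s : MvPolynomial (Fin d) ℝ) = 0 := by
    intro s hs x hx
    have hx' : ∀ l, eval x ((rb l : V) : MvPolynomial (Fin d) ℝ) = 0 := by
      intro l
      by_contra h
      exact hx (Set.mem_iUnion.mpr ⟨l, h⟩)
    let ψ : ↥(LinearMap.ker T) →ₗ[ℝ] ℝ :=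
      { toFun := fun u => eval x ((u : V) : MvPolynomial (Fin d) ℝ)
        map_add' := by intros; simp
        map_smul' := by intros; simp [smul_eval] }
    have hψ : ψ = 0 := rb.ext fun l => by simpa [ψ] using hx' l
    have : ψ ⟨s, hs⟩ = 0 := by rw [hψ]; rfl
    simpa [ψ] using this
  -- main pointwise bound
  have hbound : ∀ x, x ∉ N → ∀ p : MvPolynomial (Fin d) ℝ, p.totalDegree ≤ k →
      (∫ y, (eval y p) ^ 2 ∂μ) ≤ 1 → (eval x p) ^ 2 ≤ K x := by
    intro x hx p hpd hpint
    set P : V := ⟨p, (mem_restrictTotalDegree _ _ _).mpr hpd⟩ with hP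
    have hup : T P ∈ E := LinearMap.mem_range_self T P
    set u : E := ⟨T P, hup⟩ with hu
    set c : Fin n → ℝ := fun i => b.repr u i with hc
    have hcself : ∑ i, (c i) ^ 2 = (inner ℝ u u : ℝ) := by
      rw [← b.sum_inner_mul_inner u u]
      refine Finset.sum_congr rfl fun i _ => ?_
      simp only [hc, b.repr_apply_apply u i]
      rw [real_inner_comm (b i) u]
      ring
    have hinneruu : (inner ℝ u u : ℝ) = ∫ y, (eval y p) ^ 2 ∂μ := by
      have h1 : (inner ℝ u u : ℝ) = (inner ℝ (T P) (T P) : ℝ) := rfl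
      rw [h1, hTinner P P]
      congr 1; funext y; rw [hP]; ring
    have hcsum : ∑ i, (c i) ^ 2 ≤ 1 := by rw [hcself, hinneruu]; exact hpint
    -- the remainder is in the kernel
    have hTr : T (P - ∑ i, c i • q i) = 0 := by
      rw [map_sub, map_sum]
      simp_rw [_root_.map_smul, hq]
      have h2 : (u : Lp ℝ 2 μ) = ∑ i, c i • ((b i : E) : Lp ℝ 2 μ) := by
        have h3 := b.sum_repr u
        have h4 := congrArg (Subtype.val : E → Lp ℝ 2 μ) h3
        rw [← h4]
        push_cast
        rfl
      have h5 : T P = (u : Lp ℝ 2 μ) := rfl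
      rw [h5, h2]
      simp
    have hevalr : eval x ((P - ∑ i, c i • q i : V) : MvPolynomial (Fin d) ℝ) = 0 :=
      hker _ (LinearMap.mem_ker.mpr hTr) x hx
    have hevalP : eval x p = ∑ i, c i * eval x (q i : MvPolynomial (Fin d) ℝ) := by
      have h6 : ((P - ∑ i, c i • q i : V) : MvPolynomial (Fin d) ℝ)
          = p - ∑ i, c i • ((q i : V) : MvPolynomial (Fin d) ℝ) := by
        push_cast
        rfl
      rw [h6] at hevalr
      rw [map_sub, map_sum] at hevalr
      simp only [smul_eval] at hevalr
      linarith [hevalr]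
    rw [hevalP]
    calc (∑ i, c i * eval x (q i : MvPolynomial (Fin d) ℝ)) ^ 2
        ≤ (∑ i, (c i) ^ 2) * ∑ i, (eval x (q i : MvPolynomial (Fin d) ℝ)) ^ 2 :=
          Finset.sum_mul_sq_le_sq_mul_sq _ _ _
      _ ≤ 1 * K x := by
          apply mul_le_mul hcsum le_rfl (Finset.sum_nonneg fun i _ => sq_nonneg _) zero_le_one
      _ = K x := one_mul _
  -- conclusion
  have hnm : n ≤ m := by
    calc n ≤ Module.finrank ℝ V := by
            rw [hn, hE]; exact LinearMap.finrank_range_le T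
      _ ≤ (d + k).choose k := finrank_restrictTotalDegree_le d k
      _ = m := hm.symm
  have hm1 : 1 ≤ m := by
    rw [hm]; exact Nat.choose_pos (Nat.le_add_left k d)
  have hmr : (1:ℝ) ≤ (m:ℝ) := by exact_mod_cast hm1
  set t : ℝ := 2 * (m : ℝ) ^ 3 / ε with ht
  have ht0 : 0 < t := by rw [ht]; positivity
  have hsub : {x | ∃ p : MvPolynomial (Fin d) ℝ, p.totalDegree ≤ k ∧
      (∫ y, (eval y p) ^ 2 ∂μ) ≤ 1 ∧ 2 * (m : ℝ) ^ 3 / ε < (eval x p) ^ 2}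
      ⊆ N ∪ {x | t ≤ K x} := by
    intro x hx
    rcases hx with ⟨p, hp1, hp2, hp3⟩
    by_cases hxN : x ∈ N
    · exact Or.inl hxN
    · exact Or.inr (le_of_lt (lt_of_lt_of_le hp3 (hbound x hxN p hp1 hp2)))
  have hmono : μ {x | ∃ p : MvPolynomial (Fin d) ℝ, p.totalDegree ≤ k ∧
      (∫ y, (eval y p) ^ 2 ∂μ) ≤ 1 ∧ 2 * (m : ℝ) ^ 3 / ε < (eval x p) ^ 2}
      ≤ μ {x | t ≤ K x} := by
    calc μ _ ≤ μ (N ∪ {x | t ≤ K x}) := measure_mono hsub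
      _ ≤ μ N + μ {x | t ≤ K x} := measure_union_le _ _
      _ = μ {x | t ≤ K x} := by rw [hNnull, zero_add]
  have hmarkov := mul_meas_ge_le_integral_of_nonneg
    (ae_of_all μ fun x => Finset.sum_nonneg fun i _ => sq_nonneg
      (eval x ((q i : V) : MvPolynomial (Fin d) ℝ))) hKint t
  rw [hKval] at hmarkov
  have hfin : (μ {x | t ≤ K x}).toReal ≤ (n : ℝ) / t :=
    (le_div_iff₀ ht0).mpr (by
      have hmk : t * (μ {x | t ≤ K x}).toReal ≤ n := hmarkov
      linarith [hmk])
  have hfinal : ((μ {x | ∃ p : MvPolynomial (Fin d) ℝ, p.totalDegree ≤ k ∧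
      (∫ y, (eval y p) ^ 2 ∂μ) ≤ 1 ∧ 2 * (m : ℝ) ^ 3 / ε < (eval x p) ^ 2}).toReal)
      ≤ ε / 2 := by
    have h7 : (μ {x | ∃ p : MvPolynomial (Fin d) ℝ, p.totalDegree ≤ k ∧
        (∫ y, (eval y p) ^ 2 ∂μ) ≤ 1 ∧ 2 * (m : ℝ) ^ 3 / ε < (eval x p) ^ 2}).toReal
        ≤ (μ {x | t ≤ K x}).toReal :=
      ENNReal.toReal_mono (measure_ne_top μ _) hmono
    have h8 : (n : ℝ) / t ≤ (m : ℝ) / t := by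
      gcongr
    have h9 : (m : ℝ) / t ≤ ε / 2 := by
      have hm0 : (0:ℝ) < (m:ℝ) := by linarith
      have heq : (m : ℝ) / t = ε / (2 * (m:ℝ)^2) := by
        rw [ht]; field_simp
      rw [heq, div_le_div_iff₀ (by positivity) two_pos]
      nlinarith [mul_nonneg hε0.le (mul_nonneg (sub_nonneg.mpr hmr)
        (by linarith : (0:ℝ) ≤ (m:ℝ) + 1))]
    linarith
  exact hfinal.trans le_rfl
end

section
/- Let k be a positive integer, c > 0, and let μ be a probability measure on ℝ^d that is k-tame with constant c. Let r and r' be polynomials in d real variables of degree at most k with ∫ r² dμ = ∫ (r')² dμ = 1. Then ∫ (r(x) · r'(x))² dμ(x) ≤ e^{4k} + 4 · ∫_{e^{2k}}^{∞} B · exp(−c · B^{1/(2k)}) dB; in particular ∫ (r · r')² dμ is finite. -/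
open MeasureTheory MvPolynomial

/-- A measure `D` on `ℝ^d` is `k`-tame with constant `c` if every degree-at-most-`k`
polynomial `p` with `∫ p² dD ≤ 1` satisfies the tail bound
`D {p² > B} ≤ exp (-c • B^(1/(2k)))` for all `B ≥ exp (2k)`. -/
def KTame (d k : ℕ) (c : ℝ) (D : Measure (Fin d → ℝ)) : Prop :=
  ∀ p : MvPolynomial (Fin d) ℝ, p.totalDegree ≤ k →
    (∫ x, (eval x p) ^ 2 ∂D) ≤ 1 →
    ∀ B : ℝ, Real.exp (2 * k) ≤ B →
      (D {x | B < (eval x p) ^ 2}).toReal ≤ Real.exp (-c * B ^ (1 / (2 * (k : ℝ))))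

open Set Filter Asymptotics Real in
lemma aux_int {c α a : ℝ} (hc : 0 < c) (hα : 0 < α) (ha : 0 < a) :
    IntegrableOn (fun B : ℝ => B * Real.exp (-c * B ^ α)) (Set.Ioi a) := by
  have hcont : ContinuousOn (fun B : ℝ => B * Real.exp (-c * B ^ α)) (Set.Ici a) := by
    refine ContinuousOn.mul continuousOn_id ?_
    refine Real.continuous_exp.comp_continuousOn ?_
    refine ContinuousOn.mul continuousOn_const ?_
    exact ContinuousOn.rpow_const continuousOn_id
      (fun x hx => Or.inl (ne_of_gt (lt_of_lt_of_le ha hx)))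
  have hO : (fun B : ℝ => B * Real.exp (-c * B ^ α)) =O[atTop] fun B : ℝ => B ^ (-2 : ℝ) := by
    have h1 : (fun u : ℝ => Real.exp (-c * u)) =o[atTop] fun u : ℝ => u ^ (-3 / α) :=
      isLittleO_exp_neg_mul_rpow_atTop hc _
    have h2 := h1.comp_tendsto (tendsto_rpow_atTop hα)
    have h3 : (fun x : ℝ => Real.exp (-c * x ^ α)) =o[atTop] fun x : ℝ => x ^ (-3 : ℝ) := by
      refine h2.congr' (Eventually.of_forall fun x => rfl) ?_
      filter_upwards [eventually_ge_atTop (0 : ℝ)] with x hx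
      show (x ^ α) ^ (-3 / α) = x ^ (-3 : ℝ)
      rw [← Real.rpow_mul hx]
      congr 1
      field_simp
    have h4 := (isBigO_refl (fun x : ℝ => x) atTop).mul_isLittleO h3
    have h5 : (fun x : ℝ => x * x ^ (-3 : ℝ)) =ᶠ[atTop] fun x : ℝ => x ^ (-2 : ℝ) := by
      filter_upwards [eventually_gt_atTop (0 : ℝ)] with x hx
      rw [show x * x ^ (-3 : ℝ) = x ^ (1 : ℝ) * x ^ (-3 : ℝ) by rw [Real.rpow_one],
        ← Real.rpow_add hx]
      norm_num
    exact (h4.trans_eventuallyEq h5).isBigO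
  have hloc := hcont.locallyIntegrableOn (μ := volume) measurableSet_Ici
  have hint : IntegrableOn (fun B : ℝ => B * Real.exp (-c * B ^ α)) (Set.Ici a) :=
    hloc.integrableOn_of_isBigO_atTop hO
      ⟨Set.Ioi 1, Ioi_mem_atTop 1, integrableOn_Ioi_rpow_of_lt (by norm_num) one_pos⟩
  exact hint.mono_set Set.Ioi_subset_Ici_self

lemma aux_img {a : ℝ} (ha : 0 < a) : (fun x : ℝ => x ^ 2) '' Set.Ioi a = Set.Ioi (a ^ 2) := by
  ext t
  constructor
  · rintro ⟨B, hB, rfl⟩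
    exact pow_lt_pow_left₀ hB ha.le two_ne_zero
  · intro ht
    have ht0 : 0 ≤ t := le_of_lt (lt_of_le_of_lt (sq_nonneg a) ht)
    refine ⟨Real.sqrt t, ?_, Real.sq_sqrt ht0⟩
    have := Real.sqrt_lt_sqrt (sq_nonneg a) ht
    rwa [Real.sqrt_sq ha.le] at this

open Set in
lemma aux_deriv {a : ℝ} : ∀ x ∈ Set.Ioi a,
    HasDerivWithinAt (fun x : ℝ => x ^ 2) (2 * x) (Set.Ioi a) x := by
  intro x _
  simpa using (hasDerivAt_pow 2 x).hasDerivWithinAt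

lemma aux_inj {a : ℝ} (ha : 0 < a) : Set.InjOn (fun x : ℝ => x ^ 2) (Set.Ioi a) := by
  intro x hx y hy h
  simp only [Set.mem_Ioi] at hx hy
  simp only at h
  nlinarith [h, sq_nonneg (x - y), sq_nonneg (x + y)]

lemma aux_subst {c α a : ℝ} (ha : 0 < a) :
    ∫ t in Set.Ioi (a ^ 2), 2 * Real.exp (-c * Real.sqrt t ^ α) =
      4 * ∫ B in Set.Ioi a, B * Real.exp (-c * B ^ α) := by
  have key := integral_image_eq_integral_abs_deriv_smul measurableSet_Ioi aux_deriv (aux_inj ha)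
    (fun t => 2 * Real.exp (-c * Real.sqrt t ^ α))
  rw [aux_img ha] at key
  rw [key, ← integral_const_mul]
  refine setIntegral_congr_fun measurableSet_Ioi fun B hB => ?_
  simp only [Set.mem_Ioi] at hB
  have hB0 : 0 < B := ha.trans hB
  rw [Real.sqrt_sq hB0.le, abs_of_pos (by linarith), smul_eq_mul]
  ring

theorem stmt5 (d k : ℕ) (hk : 0 < k) (c : ℝ) (hc : 0 < c)
    (μ : Measure (Fin d → ℝ)) [IsProbabilityMeasure μ]
    (htame : KTame d k c μ)
    (r r' : MvPolynomial (Fin d) ℝ) (hr : r.totalDegree ≤ k) (hr' : r'.totalDegree ≤ k)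
    (hrnorm : (∫ x, (eval x r) ^ 2 ∂μ) = 1) (hr'norm : (∫ x, (eval x r') ^ 2 ∂μ) = 1) :
    Integrable (fun x => (eval x r * eval x r') ^ 2) μ ∧
      (∫ x, (eval x r * eval x r') ^ 2 ∂μ) ≤
        Real.exp (4 * k) +
          4 * ∫ B in Set.Ioi (Real.exp (2 * k)),
            B * Real.exp (-c * B ^ (1 / (2 * (k : ℝ)))) := by
  set α : ℝ := 1 / (2 * (k : ℝ)) with hαdef
  have hkpos : (0 : ℝ) < k := Nat.cast_pos.mpr hk
  have hα : 0 < α := by rw [hαdef]; positivity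
  set E2 : ℝ := Real.exp (2 * k) with hE2def
  have hE2 : 0 < E2 := Real.exp_pos _
  have hE4 : Real.exp (4 * (k : ℝ)) = E2 ^ 2 := by
    rw [hE2def, sq, ← Real.exp_add]; ring_nf
  set f : (Fin d → ℝ) → ℝ := fun x => (eval x r * eval x r') ^ 2 with hfdef
  have hfm : Measurable f :=
    (((r.continuous_eval).mul (r'.continuous_eval)).pow 2).measurable
  have hf_nn : ∀ x, 0 ≤ f x := fun x => sq_nonneg _
  -- tail bound
  have tail : ∀ t, E2 ^ 2 < t →
      μ {x | t < f x} ≤ ENNReal.ofReal (2 * Real.exp (-c * Real.sqrt t ^ α)) := by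
    intro t ht
    have ht0 : 0 < t := lt_trans (by positivity) ht
    have hsq : E2 ≤ Real.sqrt t := by
      rw [show E2 = Real.sqrt (E2 ^ 2) from (Real.sqrt_sq hE2.le).symm]
      exact Real.sqrt_le_sqrt ht.le
    have hsub : {x | t < f x} ⊆
        {x | Real.sqrt t < (eval x r) ^ 2} ∪ {x | Real.sqrt t < (eval x r') ^ 2} := by
      intro x hx
      by_contra hcon
      simp only [Set.mem_union, Set.mem_setOf_eq, not_or, not_lt] at hcon
      obtain ⟨h1, h2⟩ := hcon
      have hle : f x ≤ t := by
        calc f x = (eval x r) ^ 2 * (eval x r') ^ 2 := by rw [hfdef]; ring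
          _ ≤ Real.sqrt t * Real.sqrt t :=
            mul_le_mul h1 h2 (sq_nonneg _) (Real.sqrt_nonneg t)
          _ = t := Real.mul_self_sqrt ht0.le
      exact absurd hx (not_lt.mpr hle)
    have h1 := htame r hr (le_of_eq hrnorm) (Real.sqrt t) hsq
    have h2 := htame r' hr' (le_of_eq hr'norm) (Real.sqrt t) hsq
    rw [← hαdef] at h1 h2
    have hexp : (0 : ℝ) ≤ Real.exp (-c * Real.sqrt t ^ α) := (Real.exp_pos _).le
    calc μ {x | t < f x}
        ≤ μ {x | Real.sqrt t < (eval x r) ^ 2} + μ {x | Real.sqrt t < (eval x r') ^ 2} :=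
          le_trans (measure_mono hsub) (measure_union_le _ _)
      _ ≤ ENNReal.ofReal (Real.exp (-c * Real.sqrt t ^ α)) +
            ENNReal.ofReal (Real.exp (-c * Real.sqrt t ^ α)) := by
          gcongr
          · exact (ENNReal.le_ofReal_iff_toReal_le (measure_ne_top μ _) hexp).mpr h1
          · exact (ENNReal.le_ofReal_iff_toReal_le (measure_ne_top μ _) hexp).mpr h2
      _ = ENNReal.ofReal (2 * Real.exp (-c * Real.sqrt t ^ α)) := by
          rw [← ENNReal.ofReal_add hexp hexp]; congr 1; ring
  -- layer cake
  have layer := lintegral_eq_lintegral_meas_lt μ (Filter.Eventually.of_forall hf_nn)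
    hfm.aemeasurable
  have hsplit : Set.Ioi (0 : ℝ) = Set.Ioc 0 (E2 ^ 2) ∪ Set.Ioi (E2 ^ 2) :=
    (Set.Ioc_union_Ioi_eq_Ioi (by positivity)).symm
  have hpart1 : ∫⁻ t in Set.Ioc (0 : ℝ) (E2 ^ 2), μ {x | t < f x} ≤ ENNReal.ofReal (E2 ^ 2) := by
    calc ∫⁻ t in Set.Ioc (0 : ℝ) (E2 ^ 2), μ {x | t < f x}
        ≤ ∫⁻ _ in Set.Ioc (0 : ℝ) (E2 ^ 2), 1 := lintegral_mono fun t => prob_le_one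
      _ = volume (Set.Ioc (0 : ℝ) (E2 ^ 2)) := setLIntegral_one _
      _ = ENNReal.ofReal (E2 ^ 2) := by rw [Real.volume_Ioc, sub_zero]
  have hS4 : 0 ≤ ∫ B in Set.Ioi E2, B * Real.exp (-c * B ^ α) := by
    refine setIntegral_nonneg measurableSet_Ioi fun B hB => ?_
    have : 0 < B := hE2.trans hB
    positivity
  have hpart2 : ∫⁻ t in Set.Ioi (E2 ^ 2), μ {x | t < f x} ≤
      ENNReal.ofReal (4 * ∫ B in Set.Ioi E2, B * Real.exp (-c * B ^ α)) := by
    have hgmeas : Measurable fun t : ℝ => ENNReal.ofReal (2 * Real.exp (-c * Real.sqrt t ^ α)) := by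
      refine ENNReal.measurable_ofReal.comp ?_
      exact (measurable_const.mul (Real.measurable_exp.comp
        (measurable_const.mul (Real.continuous_sqrt.measurable.pow_const α))))
    have step1 : ∫⁻ t in Set.Ioi (E2 ^ 2), μ {x | t < f x} ≤
        ∫⁻ t in Set.Ioi (E2 ^ 2), ENNReal.ofReal (2 * Real.exp (-c * Real.sqrt t ^ α)) := by
      refine setLIntegral_mono hgmeas fun t ht => tail t ht
    have hgint : IntegrableOn (fun t => 2 * Real.exp (-c * Real.sqrt t ^ α))
        (Set.Ioi (E2 ^ 2)) := by
      rw [← aux_img hE2,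
        integrableOn_image_iff_integrableOn_abs_deriv_smul measurableSet_Ioi aux_deriv
          (aux_inj hE2)]
      have h4i : IntegrableOn (fun x : ℝ => 4 * (x * Real.exp (-c * x ^ α)))
          (Set.Ioi E2) := (aux_int hc hα hE2).const_mul 4
      refine h4i.congr_fun ?_ measurableSet_Ioi
      intro B hB
      simp only [Set.mem_Ioi] at hB
      have hB0 : 0 < B := hE2.trans hB
      show 4 * (B * Real.exp (-c * B ^ α)) = |2 * B| • (2 * Real.exp (-c * Real.sqrt (B ^ 2) ^ α))
      rw [Real.sqrt_sq hB0.le, abs_of_pos (by linarith), smul_eq_mul]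
      ring
    have step2 : ∫⁻ t in Set.Ioi (E2 ^ 2), ENNReal.ofReal (2 * Real.exp (-c * Real.sqrt t ^ α)) =
        ENNReal.ofReal (∫ t in Set.Ioi (E2 ^ 2), 2 * Real.exp (-c * Real.sqrt t ^ α)) :=
      (ofReal_integral_eq_lintegral_ofReal hgint
        (Filter.Eventually.of_forall fun t => by positivity)).symm
    rw [step2, aux_subst hE2] at step1
    exact step1
  have hbound : ∫⁻ x, ENNReal.ofReal (f x) ∂μ ≤
      ENNReal.ofReal (E2 ^ 2 + 4 * ∫ B in Set.Ioi E2, B * Real.exp (-c * B ^ α)) := by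
    rw [layer, hsplit, lintegral_union measurableSet_Ioi (Set.Ioc_disjoint_Ioi le_rfl),
      ENNReal.ofReal_add (by positivity) (by linarith)]
    exact add_le_add hpart1 hpart2
  have hint : Integrable f μ := by
    refine ⟨hfm.aestronglyMeasurable, ?_⟩
    rw [hasFiniteIntegral_iff_ofReal (Filter.Eventually.of_forall hf_nn)]
    exact lt_of_le_of_lt hbound ENNReal.ofReal_lt_top
  refine ⟨hint, ?_⟩
  rw [show (∫ x, f x ∂μ) = (∫⁻ x, ENNReal.ofReal (f x) ∂μ).toReal from
    integral_eq_lintegral_of_nonneg_ae (Filter.Eventually.of_forall hf_nn)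
      hfm.aestronglyMeasurable]
  calc (∫⁻ x, ENNReal.ofReal (f x) ∂μ).toReal
      ≤ (ENNReal.ofReal (E2 ^ 2 + 4 * ∫ B in Set.Ioi E2, B * Real.exp (-c * B ^ α))).toReal :=
        ENNReal.toReal_mono ENNReal.ofReal_ne_top hbound
    _ = E2 ^ 2 + 4 * ∫ B in Set.Ioi E2, B * Real.exp (-c * B ^ α) :=
        ENNReal.toReal_ofReal (by positivity)
    _ = Real.exp (4 * k) + 4 * ∫ B in Set.Ioi E2, B * Real.exp (-c * B ^ α) := by rw [hE4]
end

section
/- Let X be a measurable space, let Q be a probability measure on X × {−1, 1} with X-marginal Q_X, let f* : X → {−1, 1} and p̂ : X → ℝ be measurable, let g : X → {0, 1} be measurable, and define h : X → {−1, 1} by h(x) = sign(p̂(x)). Then Q({(x, y) : y ≠ h(x) and g(x) = 1}) ≤ Q({(x, y) : y ≠ f*(x)}) + ∫ (f*(x) − p̂(x))² · g(x) dQ_X(x). -/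
open MeasureTheory ENNReal

theorem stmt7 {X : Type*} [MeasurableSpace X]
    (Q : Measure (X × ℝ)) [IsProbabilityMeasure Q]
    (hlabels : Q {z | z.2 = 1 ∨ z.2 = -1} = 1)
    (fstar : X → ℝ) (hfstar : Measurable fstar) (hfval : ∀ x, fstar x = 1 ∨ fstar x = -1)
    (phat : X → ℝ) (hphat : Measurable phat)
    (g : X → ℝ) (hg : Measurable g) (hgval : ∀ x, g x = 0 ∨ g x = 1)
    (h : X → ℝ) (hdef : ∀ x, h x = if 0 ≤ phat x then 1 else -1) :
    Q {z | z.2 ≠ h z.1 ∧ g z.1 = 1} ≤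
      Q {z | z.2 ≠ fstar z.1} +
        ∫⁻ x, ENNReal.ofReal ((fstar x - phat x) ^ 2 * g x) ∂(Q.map Prod.fst) := by
  have hh : Measurable h := by
    have : h = fun x => if 0 ≤ phat x then (1 : ℝ) else -1 := funext hdef
    rw [this]
    exact Measurable.ite (measurableSet_le measurable_const hphat)
      measurable_const measurable_const
  set C' : Set X := {x | fstar x ≠ h x ∧ g x = 1} with hC'def
  have hC' : MeasurableSet C' := by
    have h1 : MeasurableSet {x | fstar x ≠ h x} :=
      (measurableSet_eq_fun hfstar hh).compl
    have h2 : MeasurableSet {x | g x = 1} := hg (measurableSet_singleton 1)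
    exact h1.inter h2
  have hsub : {z : X × ℝ | z.2 ≠ h z.1 ∧ g z.1 = 1} ⊆
      {z : X × ℝ | z.2 ≠ fstar z.1} ∪ (Prod.fst ⁻¹' C') := by
    rintro ⟨x, y⟩ ⟨hy, hgx⟩
    by_cases hyf : y = fstar x
    · right
      exact ⟨fun hfh => hy (hyf.trans hfh), hgx⟩
    · left; exact hyf
  have step1 : Q {z : X × ℝ | z.2 ≠ h z.1 ∧ g z.1 = 1} ≤
      Q {z : X × ℝ | z.2 ≠ fstar z.1} + Q (Prod.fst ⁻¹' C') :=
    le_trans (measure_mono hsub) (measure_union_le _ _)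
  have step2 : Q (Prod.fst ⁻¹' C') = (Q.map Prod.fst) C' := by
    rw [Measure.map_apply measurable_fst hC']
  have step3 : (Q.map Prod.fst) C' ≤
      ∫⁻ x, ENNReal.ofReal ((fstar x - phat x) ^ 2 * g x) ∂(Q.map Prod.fst) := by
    rw [← lintegral_indicator_one hC']
    apply lintegral_mono
    intro x
    by_cases hx : x ∈ C'
    · rw [Set.indicator_of_mem hx]
      obtain ⟨hne, hgx⟩ := hx
      have hge : (1 : ℝ) ≤ (fstar x - phat x) ^ 2 * g x := by
        rw [hgx, mul_one]
        rcases hfval x with hf | hf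
        · have hp : ¬ (0 ≤ phat x) := by
            intro hp; apply hne; rw [hf, hdef x, if_pos hp]
          push_neg at hp
          nlinarith
        · have hp : 0 ≤ phat x := by
            by_contra hp; apply hne; rw [hf, hdef x, if_neg hp]
          nlinarith
      calc (1 : ℝ≥0∞) = ENNReal.ofReal 1 := by simp
        _ ≤ _ := ENNReal.ofReal_le_ofReal hge
    · rw [Set.indicator_of_notMem hx]; exact zero_le
  calc Q {z : X × ℝ | z.2 ≠ h z.1 ∧ g z.1 = 1}
      ≤ Q {z : X × ℝ | z.2 ≠ fstar z.1} + Q (Prod.fst ⁻¹' C') := step1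
    _ ≤ _ := add_le_add_right (le_of_eq step2 |>.trans step3) _
end

section
/- Let X be a measurable space, let Q be a probability measure on X × {−1, 1} with X-marginal D, let f* : X → {−1, 1} be measurable, and let p_low, p_up : X → ℝ be measurable, square-integrable with respect to D, satisfying p_low(x) ≤ f*(x) ≤ p_up(x) for all x ∈ X and ∫ (p_up − p_low)² dD ≤ ε_s for some ε_s ≥ 0. Let p̂ : X → ℝ be measurable, square-integrable with respect to D, and satisfy ∫ (y − p̂(x))² dQ(x, y) ≤ ∫ (y − p_low(x))² dQ(x, y). Then ∫ (p_low − p̂)² dD ≤ 32 · Q({(x, y) : y ≠ f*(x)}) + 8 · ε_s. -/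
open MeasureTheory

theorem stmt8 {X : Type*} [MeasurableSpace X]
    (Q : Measure (X × ℝ)) [IsProbabilityMeasure Q]
    (hlabels : Q {z | z.2 = 1 ∨ z.2 = -1} = 1)
    (D : Measure X) (hmarg : Q.map Prod.fst = D)
    (fstar : X → ℝ) (hfstar : Measurable fstar) (hfval : ∀ x, fstar x = 1 ∨ fstar x = -1)
    (plow pup : X → ℝ) (hplow : Measurable plow) (hpup : Measurable pup)
    (hplowL2 : Integrable (fun x => (plow x) ^ 2) D)
    (hpupL2 : Integrable (fun x => (pup x) ^ 2) D)
    (hsand : ∀ x, plow x ≤ fstar x ∧ fstar x ≤ pup x)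
    (εs : ℝ) (hεs : 0 ≤ εs) (hgap : (∫ x, (pup x - plow x) ^ 2 ∂D) ≤ εs)
    (phat : X → ℝ) (hphat : Measurable phat)
    (hphatL2 : Integrable (fun x => (phat x) ^ 2) D)
    (hERM : (∫ z, (z.2 - phat z.1) ^ 2 ∂Q) ≤ ∫ z, (z.2 - plow z.1) ^ 2 ∂Q) :
    (∫ x, (plow x - phat x) ^ 2 ∂D) ≤ 32 * (Q {z | z.2 ≠ fstar z.1}).toReal + 8 * εs := by
  -- the bad set
  set S : Set (X × ℝ) := {z | z.2 ≠ fstar z.1} with hSdef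
  have hS : MeasurableSet S := (measurableSet_eq_fun measurable_snd (hfstar.comp measurable_fst)).compl
  -- labels a.e. ±1
  have hsm : MeasurableSet {z : X × ℝ | z.2 = 1 ∨ z.2 = -1} := by
    have h1 : MeasurableSet {z : X × ℝ | z.2 = 1} := measurable_snd (measurableSet_singleton 1)
    have h2 : MeasurableSet {z : X × ℝ | z.2 = -1} := measurable_snd (measurableSet_singleton (-1))
    exact h1.union h2
  have hae : ∀ᵐ z ∂Q, z.2 = 1 ∨ z.2 = -1 := by
    rw [ae_iff]
    have : Q ({z : X × ℝ | z.2 = 1 ∨ z.2 = -1}ᶜ) = 0 := by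
      rw [measure_compl hsm (measure_ne_top _ _), hlabels, measure_univ]
      simp
    simpa [Set.compl_setOf] using this
  -- transfer of integrals and integrability from D to Q
  have hTransfer : ∀ (h : X → ℝ), Measurable h →
      (∫ x, h x ∂D) = ∫ z, h z.1 ∂Q := by
    intro h hh
    rw [← hmarg, integral_map measurable_fst.aemeasurable hh.aestronglyMeasurable]
  have hIntTransfer : ∀ (h : X → ℝ), Measurable h → Integrable h D →
      Integrable (fun z : X × ℝ => h z.1) Q := by
    intro h hh hI
    rw [← hmarg] at hI
    exact (integrable_map_measure hh.aestronglyMeasurable measurable_fst.aemeasurable).mp hI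
  -- integrability of squares in Q
  have int_plowQ : Integrable (fun z : X × ℝ => plow z.1 ^ 2) Q :=
    hIntTransfer _ (hplow.pow_const 2) hplowL2
  have int_phatQ : Integrable (fun z : X × ℝ => phat z.1 ^ 2) Q :=
    hIntTransfer _ (hphat.pow_const 2) hphatL2
  have int_sq : ∀ (p : X → ℝ), Measurable p → Integrable (fun z : X × ℝ => p z.1 ^ 2) Q →
      Integrable (fun z : X × ℝ => (z.2 - p z.1) ^ 2) Q := by
    intro p hp hI
    have hg : Integrable (fun z : X × ℝ => 2 * p z.1 ^ 2 + 2) Q :=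
      (hI.const_mul 2).add (integrable_const 2)
    apply Integrable.mono' hg
      ((measurable_snd.sub (hp.comp measurable_fst)).pow_const 2).aestronglyMeasurable
    filter_upwards [hae] with z hz
    simp only [Pi.sub_apply, Function.comp_apply]
    have h2 : z.2 ^ 2 = 1 := by rcases hz with h | h <;> rw [h] <;> norm_num
    rw [Real.norm_eq_abs, abs_of_nonneg (sq_nonneg _)]
    nlinarith [sq_nonneg (z.2 + p z.1)]
  have int_yplow := int_sq plow hplow int_plowQ
  have int_yphat := int_sq phat hphat int_phatQ
  have int_yf : Integrable (fun z : X × ℝ => (z.2 - fstar z.1) ^ 2) Q := by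
    apply Integrable.mono' (integrable_const (4 : ℝ))
      ((measurable_snd.sub (hfstar.comp measurable_fst)).pow_const 2).aestronglyMeasurable
    filter_upwards [hae] with z hz
    simp only [Pi.sub_apply, Function.comp_apply]
    rw [Real.norm_eq_abs, abs_of_nonneg (sq_nonneg _)]
    rcases hz with h | h <;> rcases hfval z.1 with h' | h' <;> rw [h, h'] <;> norm_num
  -- E ≤ 4 * err
  have hE : (∫ z, (z.2 - fstar z.1) ^ 2 ∂Q) ≤ 4 * (Q S).toReal := by
    have hind : Integrable (S.indicator fun _ => (4 : ℝ)) Q :=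
      (integrable_const (4 : ℝ)).indicator hS
    have hle : (∫ z, (z.2 - fstar z.1) ^ 2 ∂Q) ≤ ∫ z, S.indicator (fun _ => (4 : ℝ)) z ∂Q := by
      apply integral_mono_ae int_yf hind
      filter_upwards [hae] with z hz
      by_cases hzS : z ∈ S
      · rw [Set.indicator_of_mem hzS]
        rcases hz with h | h <;> rcases hfval z.1 with h' | h' <;> rw [h, h'] <;> norm_num
      · rw [Set.indicator_of_notMem hzS]
        have : z.2 = fstar z.1 := not_not.mp hzS
        rw [this]
        simp
    rw [integral_indicator_const _ hS] at hle
    simpa [mul_comm, measureReal_def] using hle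
  -- gap integrability and bound on D
  have int_gapD : Integrable (fun x => (pup x - plow x) ^ 2) D := by
    have hg : Integrable (fun x => 2 * pup x ^ 2 + 2 * plow x ^ 2) D :=
      (hpupL2.const_mul 2).add (hplowL2.const_mul 2)
    apply Integrable.mono' hg ((hpup.sub hplow).pow_const 2).aestronglyMeasurable
    refine Filter.Eventually.of_forall fun x => ?_
    rw [Real.norm_eq_abs, abs_of_nonneg (sq_nonneg _)]
    simp only [Pi.sub_apply]
    nlinarith [sq_nonneg (pup x + plow x)]
  have int_fpD : Integrable (fun x => (fstar x - plow x) ^ 2) D := by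
    apply Integrable.mono' int_gapD ((hfstar.sub hplow).pow_const 2).aestronglyMeasurable
    refine Filter.Eventually.of_forall fun x => ?_
    rw [Real.norm_eq_abs, abs_of_nonneg (sq_nonneg _)]
    have h1 := (hsand x).1
    have h2 := (hsand x).2
    simp only [Pi.sub_apply]
    nlinarith
  have hF_D : (∫ x, (fstar x - plow x) ^ 2 ∂D) ≤ εs := by
    refine le_trans (integral_mono int_fpD int_gapD fun x => ?_) hgap
    have h1 := (hsand x).1
    have h2 := (hsand x).2
    nlinarith
  have int_fpQ : Integrable (fun z : X × ℝ => (fstar z.1 - plow z.1) ^ 2) Q :=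
    hIntTransfer _ ((hfstar.sub hplow).pow_const 2) int_fpD
  have hF : (∫ z, (fstar z.1 - plow z.1) ^ 2 ∂Q) ≤ εs := by
    rw [← hTransfer (fun x => (fstar x - plow x) ^ 2) ((hfstar.sub hplow).pow_const 2)]
    exact hF_D
  -- integrability of (plow - phat)²
  have int_ppD : Integrable (fun x => (plow x - phat x) ^ 2) D := by
    have hg : Integrable (fun x => 2 * plow x ^ 2 + 2 * phat x ^ 2) D :=
      (hplowL2.const_mul 2).add (hphatL2.const_mul 2)
    apply Integrable.mono' hg ((hplow.sub hphat).pow_const 2).aestronglyMeasurable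
    refine Filter.Eventually.of_forall fun x => ?_
    rw [Real.norm_eq_abs, abs_of_nonneg (sq_nonneg _)]
    simp only [Pi.sub_apply]
    nlinarith [sq_nonneg (plow x + phat x)]
  have int_ppQ : Integrable (fun z : X × ℝ => (plow z.1 - phat z.1) ^ 2) Q :=
    hIntTransfer _ ((hplow.sub hphat).pow_const 2) int_ppD
  -- main chain
  have hA : (∫ z, (plow z.1 - phat z.1) ^ 2 ∂Q) ≤
      2 * (∫ z, (z.2 - phat z.1) ^ 2 ∂Q) + 2 * (∫ z, (z.2 - plow z.1) ^ 2 ∂Q) := by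
    have h1 : Integrable (fun z : X × ℝ => 2 * (z.2 - phat z.1) ^ 2) Q := int_yphat.const_mul 2
    have h2 : Integrable (fun z : X × ℝ => 2 * (z.2 - plow z.1) ^ 2) Q := int_yplow.const_mul 2
    have hg : Integrable (fun z : X × ℝ => 2 * (z.2 - phat z.1) ^ 2 + 2 * (z.2 - plow z.1) ^ 2) Q :=
      h1.add h2
    have := integral_mono int_ppQ hg
      (fun z => by dsimp only; nlinarith [sq_nonneg (2 * z.2 - plow z.1 - phat z.1)])
    rwa [integral_add h1 h2, integral_const_mul, integral_const_mul] at this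
  have hC : (∫ z, (z.2 - plow z.1) ^ 2 ∂Q) ≤
      2 * (∫ z, (z.2 - fstar z.1) ^ 2 ∂Q) + 2 * (∫ z, (fstar z.1 - plow z.1) ^ 2 ∂Q) := by
    have h1 : Integrable (fun z : X × ℝ => 2 * (z.2 - fstar z.1) ^ 2) Q := int_yf.const_mul 2
    have h2 : Integrable (fun z : X × ℝ => 2 * (fstar z.1 - plow z.1) ^ 2) Q := int_fpQ.const_mul 2
    have hg : Integrable (fun z : X × ℝ => 2 * (z.2 - fstar z.1) ^ 2 + 2 * (fstar z.1 - plow z.1) ^ 2) Q :=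
      h1.add h2
    have := integral_mono int_yplow hg
      (fun z => by dsimp only; nlinarith [sq_nonneg (z.2 - 2 * fstar z.1 + plow z.1)])
    rwa [integral_add h1 h2, integral_const_mul, integral_const_mul] at this
  rw [hTransfer (fun x => (plow x - phat x) ^ 2) ((hplow.sub hphat).pow_const 2)]
  have hSgoal : {z : X × ℝ | z.2 ≠ fstar z.1} = S := rfl
  linarith [hA, hERM, hC, hE, hF]
end

section
/- Let d, k be positive integers, η ∈ (0, 1), c > 0, and ε_s ≥ 0. Let D be a probability measure on ℝ^d that is k-tame with constant c and such that every polynomial in d real variables of degree at most k is square-integrable with respect to D, and let D' be any probability measure on ℝ^d. Then there exists a measurable g : ℝ^d → {0, 1} satisfying D({x : g(x) = 0}) ≤ (η/2) · d_TV(D, D') + η/2 (in particular, D({x : g(x) = 0}) ≤ η) such that for all probability measures Q_train, Q_test on ℝ^d × {−1, 1} with ℝ^d-marginals D and D' respectively, every measurable f* : ℝ^d → {−1, 1} admitting polynomials p_low, p_up in d real variables of degree at most k with p_low ≤ f* ≤ p_up pointwise and ∫ (p_up − p_low)² dD ≤ ε_s, and every polynomial p̂ of degree at most k with ∫ (y −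 p̂(x))² dQ_train ≤ ∫ (y − p_low(x))² dQ_train, one has Q_test({(x, y) : y ≠ sign(p̂(x)) and g(x) = 1}) ≤ Q_test({(x, y) : y ≠ f*(x)}) + (25600/η) · Q_train({(x, y) : y ≠ f*(x)}) + (7200/η) · ε_s. -/
open MeasureTheory MvPolynomial

/-- Total variation distance between two measures: the supremum over measurable sets `A`
of `|D A - D' A|` (as real numbers). -/
noncomputable def tvDist {X : Type*} [MeasurableSpace X] (D D' : Measure X) : ℝ :=
  ⨆ A : {A : Set X // MeasurableSet A}, |(D A.1).toReal - (D' A.1).toReal|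

set_option maxHeartbeats 1000000 in
theorem stmt10 (d k : ℕ) (hd : 0 < d) (hk : 0 < k)
    (η : ℝ) (hη0 : 0 < η) (hη1 : η < 1) (c : ℝ) (hc : 0 < c) (εs : ℝ) (hεs : 0 ≤ εs)
    (D D' : Measure (Fin d → ℝ)) [IsProbabilityMeasure D] [IsProbabilityMeasure D']
    (htame : KTame d k c D)
    (hInt : ∀ p : MvPolynomial (Fin d) ℝ, p.totalDegree ≤ k →
      Integrable (fun x => (eval x p) ^ 2) D) :
    ∃ g : (Fin d → ℝ) → ℝ, Measurable g ∧ (∀ x, g x = 0 ∨ g x = 1) ∧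
      (D {x | g x = 0}).toReal ≤ (η / 2) * tvDist D D' + η / 2 ∧
      (D {x | g x = 0}).toReal ≤ η ∧
      ∀ (Qtrain Qtest : Measure ((Fin d → ℝ) × ℝ)),
        IsProbabilityMeasure Qtrain → IsProbabilityMeasure Qtest →
        Qtrain {z | z.2 = 1 ∨ z.2 = -1} = 1 → Qtest {z | z.2 = 1 ∨ z.2 = -1} = 1 →
        Qtrain.map Prod.fst = D → Qtest.map Prod.fst = D' →
        ∀ fstar : (Fin d → ℝ) → ℝ, Measurable fstar →
          (∀ x, fstar x = 1 ∨ fstar x = -1) →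
        ∀ plow pup : MvPolynomial (Fin d) ℝ,
          plow.totalDegree ≤ k → pup.totalDegree ≤ k →
          (∀ x, eval x plow ≤ fstar x ∧ fstar x ≤ eval x pup) →
          (∫ x, (eval x pup - eval x plow) ^ 2 ∂D) ≤ εs →
        ∀ phat : MvPolynomial (Fin d) ℝ, phat.totalDegree ≤ k →
          (∫ z, (z.2 - eval z.1 phat) ^ 2 ∂Qtrain) ≤
            (∫ z, (z.2 - eval z.1 plow) ^ 2 ∂Qtrain) →
        (Qtest {z | z.2 ≠ (if 0 ≤ eval z.1 phat then (1 : ℝ) else -1) ∧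
            g z.1 = 1}).toReal ≤
          (Qtest {z | z.2 ≠ fstar z.1}).toReal +
            (25600 / η) * (Qtrain {z | z.2 ≠ fstar z.1}).toReal + (7200 / η) * εs := by
  classical
  -- Lebesgue decomposition of D' w.r.t. D
  obtain ⟨s, hsm, hsp, hDsc⟩ := Measure.mutuallySingular_singularPart D' D
  set f := D'.rnDeriv D with hfdef
  set lam : ENNReal := ENNReal.ofReal (2 / η) with hlamdef
  have hfm : Measurable f := Measure.measurable_rnDeriv D' D
  have hlamset : MeasurableSet {x | lam ≤ f x} := measurableSet_le measurable_const hfm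
  set B : Set (Fin d → ℝ) := sᶜ ∪ {x | lam ≤ f x} with hBdef
  have hB : MeasurableSet B := hsm.compl.union hlamset
  have hg01 : ∀ x, Bᶜ.indicator (fun _ => (1 : ℝ)) x = 0 ∨ Bᶜ.indicator (fun _ => (1 : ℝ)) x = 1 := by
    intro x
    by_cases hx : x ∈ Bᶜ <;> simp [Set.indicator_apply, hx]
  have hgzero : {x | Bᶜ.indicator (fun _ => (1 : ℝ)) x = 0} = B := by
    ext x
    by_cases hx : x ∈ B
    · simp [Set.indicator_apply, Set.mem_compl_iff, hx]
    · simp [Set.indicator_apply, Set.mem_compl_iff, hx]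
  have hDB : D B ≤ ENNReal.ofReal (η / 2) := by
    have h1 : D B ≤ D sᶜ + D {x | lam ≤ f x} := measure_union_le _ _
    have h2 : D {x | lam ≤ f x} ≤ (∫⁻ x, f x ∂D) / lam :=
      meas_ge_le_lintegral_div hfm.aemeasurable
        (by simp [hlamdef, ENNReal.ofReal_eq_zero, not_le]; positivity)
        (by simp [hlamdef])
    have h3 : (∫⁻ x, f x ∂D) ≤ 1 := by
      refine le_trans (Measure.lintegral_rnDeriv_le) ?_
      simp
    have h4 : (∫⁻ x, f x ∂D) / lam ≤ 1 / lam := ENNReal.div_le_div_right h3 lam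
    have h5 : (1 : ENNReal) / lam = ENNReal.ofReal (η / 2) := by
      rw [one_div, hlamdef, ← ENNReal.ofReal_inv_of_pos (by positivity), inv_div]
    calc D B ≤ D sᶜ + D {x | lam ≤ f x} := h1
      _ = D {x | lam ≤ f x} := by rw [hDsc, zero_add]
      _ ≤ (∫⁻ x, f x ∂D) / lam := h2
      _ ≤ 1 / lam := h4
      _ = ENNReal.ofReal (η / 2) := h5
  have hDBr : (D B).toReal ≤ η / 2 := by
    have := ENNReal.toReal_mono (by simp) hDB
    rwa [ENNReal.toReal_ofReal (by positivity)] at this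
  have htv : 0 ≤ tvDist D D' := Real.iSup_nonneg fun A => abs_nonneg _
  refine ⟨Bᶜ.indicator (fun _ => (1 : ℝ)), (measurable_const.indicator hB.compl), hg01, ?_, ?_, ?_⟩
  · rw [hgzero]; nlinarith
  · rw [hgzero]; linarith
  -- main part
  intro Qtrain Qtest hPtr hPte hytr hyte hmtr hmte fstar hfsm hfs1 plow pup hdl hdu hsand
    hUL phat hdh hERM
  -- abbreviations
  set err : ℝ := (Qtrain {z | z.2 ≠ fstar z.1}).toReal with herrdef
  have herr0 : 0 ≤ err := ENNReal.toReal_nonneg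
  -- measurability of polynomial evaluation
  have hmev : ∀ p : MvPolynomial (Fin d) ℝ, Measurable fun x : Fin d → ℝ => eval x p :=
    fun p => (MvPolynomial.continuous_eval p).measurable
  -- degree facts
  have hdPL : (phat - plow).totalDegree ≤ k := (totalDegree_sub _ _).trans (max_le hdh hdl)
  have hdUL : (pup - plow).totalDegree ≤ k := (totalDegree_sub _ _).trans (max_le hdu hdl)
  have hevsub : ∀ (a b : MvPolynomial (Fin d) ℝ) (x : Fin d → ℝ),
      eval x (a - b) = eval x a - eval x b := fun a b x => map_sub (eval x) a b
  -- D-integrability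
  have hIPLD : Integrable (fun x => (eval x phat - eval x plow) ^ 2) D := by
    have := hInt (phat - plow) hdPL
    simpa [hevsub] using this
  have hIULD : Integrable (fun x => (eval x pup - eval x plow) ^ 2) D := by
    have := hInt (pup - plow) hdUL
    simpa [hevsub] using this
  -- a.e. labels in {±1}
  have hSm : MeasurableSet {z : (Fin d → ℝ) × ℝ | z.2 = 1 ∨ z.2 = -1} := by
    have h1 : MeasurableSet {z : (Fin d → ℝ) × ℝ | z.2 = 1} :=
      measurable_snd (measurableSet_singleton 1)
    have h2 : MeasurableSet {z : (Fin d → ℝ) × ℝ | z.2 = -1} :=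
      measurable_snd (measurableSet_singleton (-1))
    simpa [Set.setOf_or] using h1.union h2
  have hae : ∀ᵐ z ∂Qtrain, z.2 = 1 ∨ z.2 = -1 := by
    rw [ae_iff]
    have : Qtrain {z : (Fin d → ℝ) × ℝ | z.2 = 1 ∨ z.2 = -1}ᶜ = 0 := by
      rw [measure_compl hSm (measure_ne_top _ _), hytr, measure_univ, tsub_self]
    simpa [Set.compl_setOf] using this
  -- Q-integrability of squares of polynomials
  have hkey : ∀ p : MvPolynomial (Fin d) ℝ, p.totalDegree ≤ k →
      Integrable (fun z : (Fin d → ℝ) × ℝ => (eval z.1 p) ^ 2) Qtrain := by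
    intro p hp
    have h := hInt p hp
    rw [← hmtr] at h
    exact (integrable_map_measure ((hmev p).pow_const 2).aestronglyMeasurable
      measurable_fst.aemeasurable).mp h
  have hQPL : Integrable (fun z : (Fin d → ℝ) × ℝ => (eval z.1 phat - eval z.1 plow) ^ 2) Qtrain := by
    have := hkey (phat - plow) hdPL
    simpa [hevsub] using this
  have hQUL : Integrable (fun z : (Fin d → ℝ) × ℝ => (eval z.1 pup - eval z.1 plow) ^ 2) Qtrain := by
    have := hkey (pup - plow) hdUL
    simpa [hevsub] using this
  -- integrability of (y - p)^2 for polys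
  have hIyp : ∀ p : MvPolynomial (Fin d) ℝ, p.totalDegree ≤ k →
      Integrable (fun z : (Fin d → ℝ) × ℝ => (z.2 - eval z.1 p) ^ 2) Qtrain := by
    intro p hp
    refine Integrable.mono' ((integrable_const (2:ℝ)).add ((hkey p hp).const_mul 2))
      ((measurable_snd.sub ((hmev p).comp measurable_fst)).pow_const 2).aestronglyMeasurable ?_
    filter_upwards [hae] with z hz
    have h2 : (z.2 - eval z.1 p) ^ 2 ≤ 2 + 2 * (eval z.1 p) ^ 2 := by
      have hy2 : z.2 ^ 2 = 1 := by rcases hz with h | h <;> rw [h] <;> norm_num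
      nlinarith [sq_nonneg (z.2 + eval z.1 p)]
    rw [Real.norm_eq_abs, abs_of_nonneg (sq_nonneg _)]
    simpa using h2
  -- integrability of (y - fstar)^2
  have hIyF : Integrable (fun z : (Fin d → ℝ) × ℝ => (z.2 - fstar z.1) ^ 2) Qtrain := by
    refine Integrable.mono' (integrable_const (4:ℝ))
      ((measurable_snd.sub (hfsm.comp measurable_fst)).pow_const 2).aestronglyMeasurable ?_
    filter_upwards [hae] with z hz
    have h4 : (z.2 - fstar z.1) ^ 2 ≤ 4 := by
      rcases hz with h | h <;> rcases hfs1 z.1 with h' | h' <;> rw [h, h'] <;> norm_num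
    rw [Real.norm_eq_abs, abs_of_nonneg (sq_nonneg _)]
    exact h4
  -- integrability of (fstar - plow)^2
  have hIFL : Integrable (fun z : (Fin d → ℝ) × ℝ => (fstar z.1 - eval z.1 plow) ^ 2) Qtrain := by
    refine Integrable.mono' hQUL
      (((hfsm.comp measurable_fst).sub
        ((hmev plow).comp measurable_fst)).pow_const 2).aestronglyMeasurable ?_
    filter_upwards with z
    have h1 := (hsand z.1).1
    have h2 := (hsand z.1).2
    rw [Real.norm_eq_abs, abs_of_nonneg (sq_nonneg _)]
    nlinarith [sq_nonneg (eval z.1 pup - fstar z.1),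
      mul_nonneg (sub_nonneg.mpr h2) (sub_nonneg.mpr h1)]
  -- the ERM consequence: ∫ (phat - plow)^2 dQ ≤ ∫ 2 (y - plow)(phat - plow) dQ
  have hGrep : (fun z : (Fin d → ℝ) × ℝ =>
      2 * (z.2 - eval z.1 plow) * (eval z.1 phat - eval z.1 plow)) =
      fun z => (z.2 - eval z.1 plow) ^ 2 + (eval z.1 phat - eval z.1 plow) ^ 2
        - (z.2 - eval z.1 phat) ^ 2 := by
    funext z; ring
  have hIG : Integrable (fun z : (Fin d → ℝ) × ℝ =>
      2 * (z.2 - eval z.1 plow) * (eval z.1 phat - eval z.1 plow)) Qtrain := by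
    rw [hGrep]; exact ((hIyp plow hdl).add hQPL).sub (hIyp phat hdh)
  have hintG : ∫ z, 2 * (z.2 - eval z.1 plow) * (eval z.1 phat - eval z.1 plow) ∂Qtrain
      = (∫ z, (z.2 - eval z.1 plow) ^ 2 ∂Qtrain)
        + (∫ z, (eval z.1 phat - eval z.1 plow) ^ 2 ∂Qtrain)
        - ∫ z, (z.2 - eval z.1 phat) ^ 2 ∂Qtrain := by
    have hIBC : Integrable (fun z : (Fin d → ℝ) × ℝ =>
        (z.2 - eval z.1 plow) ^ 2 + (eval z.1 phat - eval z.1 plow) ^ 2) Qtrain :=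
      (hIyp plow hdl).add hQPL
    rw [hGrep, integral_sub hIBC (hIyp phat hdh)]
    try simp only [Pi.add_apply]
    rw [integral_add (hIyp plow hdl) hQPL]
  have hCG : (∫ z, (eval z.1 phat - eval z.1 plow) ^ 2 ∂Qtrain)
      ≤ ∫ z, 2 * (z.2 - eval z.1 plow) * (eval z.1 phat - eval z.1 plow) ∂Qtrain := by
    rw [hintG]; linarith
  -- bound the cross term
  have hIH : Integrable (fun z : (Fin d → ℝ) × ℝ =>
      4 * (z.2 - fstar z.1) ^ 2 + 4 * (fstar z.1 - eval z.1 plow) ^ 2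
        + (eval z.1 phat - eval z.1 plow) ^ 2 / 2) Qtrain :=
    ((hIyF.const_mul 4).add (hIFL.const_mul 4)).add (hQPL.div_const 2)
  have hGH : ∫ z, 2 * (z.2 - eval z.1 plow) * (eval z.1 phat - eval z.1 plow) ∂Qtrain
      ≤ ∫ z, (4 * (z.2 - fstar z.1) ^ 2 + 4 * (fstar z.1 - eval z.1 plow) ^ 2
        + (eval z.1 phat - eval z.1 plow) ^ 2 / 2) ∂Qtrain := by
    refine integral_mono hIG hIH ?_
    intro z
    nlinarith [sq_nonneg (2 * (z.2 - fstar z.1) - (eval z.1 phat - eval z.1 plow) / 2),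
      sq_nonneg (2 * (fstar z.1 - eval z.1 plow) - (eval z.1 phat - eval z.1 plow) / 2)]
  have hintH : ∫ z, (4 * (z.2 - fstar z.1) ^ 2 + 4 * (fstar z.1 - eval z.1 plow) ^ 2
        + (eval z.1 phat - eval z.1 plow) ^ 2 / 2) ∂Qtrain
      = 4 * (∫ z, (z.2 - fstar z.1) ^ 2 ∂Qtrain)
        + 4 * (∫ z, (fstar z.1 - eval z.1 plow) ^ 2 ∂Qtrain)
        + (∫ z, (eval z.1 phat - eval z.1 plow) ^ 2 ∂Qtrain) / 2 := by
    have hI12 : Integrable (fun z : (Fin d → ℝ) × ℝ =>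
        4 * (z.2 - fstar z.1) ^ 2 + 4 * (fstar z.1 - eval z.1 plow) ^ 2) Qtrain :=
      (hIyF.const_mul 4).add (hIFL.const_mul 4)
    rw [integral_add hI12 (hQPL.div_const 2)]
    try simp only [Pi.add_apply]
    rw [integral_add (hIyF.const_mul 4) (hIFL.const_mul 4), integral_const_mul,
      integral_const_mul, integral_div]
  -- ∫ (y - fstar)^2 ≤ 4 err
  have hWQm : MeasurableSet {z : (Fin d → ℝ) × ℝ | z.2 ≠ fstar z.1} := by
    have h0 : Measurable fun z : (Fin d → ℝ) × ℝ => z.2 - fstar z.1 :=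
      measurable_snd.sub (hfsm.comp measurable_fst)
    have : {z : (Fin d → ℝ) × ℝ | z.2 ≠ fstar z.1}
        = (fun z : (Fin d → ℝ) × ℝ => z.2 - fstar z.1) ⁻¹' ({0}ᶜ) := by
      ext z; simp [sub_eq_zero]
    rw [this]
    exact h0 (measurableSet_singleton 0).compl
  have hyF4 : (∫ z, (z.2 - fstar z.1) ^ 2 ∂Qtrain) ≤ 4 * err := by
    have hind : Integrable
        (({z : (Fin d → ℝ) × ℝ | z.2 ≠ fstar z.1}).indicator fun _ => (4:ℝ)) Qtrain :=
      (integrable_const (4:ℝ)).indicator hWQm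
    have hmono : (∫ z, (z.2 - fstar z.1) ^ 2 ∂Qtrain)
        ≤ ∫ z, ({z : (Fin d → ℝ) × ℝ | z.2 ≠ fstar z.1}).indicator (fun _ => (4:ℝ)) z ∂Qtrain := by
      refine integral_mono_ae hIyF hind ?_
      filter_upwards [hae] with z hz
      by_cases hzf : z.2 = fstar z.1
      · rw [hzf]
        simp only [sub_self, ne_eq]
        have : (0:ℝ) ≤ ({z : (Fin d → ℝ) × ℝ | z.2 ≠ fstar z.1}).indicator (fun _ => (4:ℝ)) z :=
          Set.indicator_nonneg (fun _ _ => by norm_num) z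
        simpa using this
      · rcases hz with h | h <;> rcases hfs1 z.1 with h' | h'
        · exact absurd (h.trans h'.symm) hzf
        · rw [Set.indicator_of_mem (by exact hzf), h, h']; norm_num
        · rw [Set.indicator_of_mem (by exact hzf), h, h']; norm_num
        · exact absurd (h.trans h'.symm) hzf
    have hval : ∫ z, ({z : (Fin d → ℝ) × ℝ | z.2 ≠ fstar z.1}).indicator (fun _ => (4:ℝ)) z ∂Qtrain
        = err * 4 := by
      rw [integral_indicator_const (4:ℝ) hWQm, smul_eq_mul, herrdef]
      rfl
    rw [hval] at hmono; linarith
  -- ∫ (fstar - plow)^2 dQ ≤ εs, via transfer to D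
  have hmapUL : (∫ z, (eval z.1 pup - eval z.1 plow) ^ 2 ∂Qtrain)
      = ∫ x, (eval x pup - eval x plow) ^ 2 ∂D := by
    rw [← hmtr]
    exact (integral_map measurable_fst.aemeasurable
      (((hmev pup).sub (hmev plow)).pow_const 2).aestronglyMeasurable).symm
  have hFLe : (∫ z, (fstar z.1 - eval z.1 plow) ^ 2 ∂Qtrain) ≤ εs := by
    have h1 : (∫ z, (fstar z.1 - eval z.1 plow) ^ 2 ∂Qtrain)
        ≤ ∫ z, (eval z.1 pup - eval z.1 plow) ^ 2 ∂Qtrain := by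
      refine integral_mono hIFL hQUL ?_
      intro z
      show (fstar z.1 - eval z.1 plow) ^ 2 ≤ (eval z.1 pup - eval z.1 plow) ^ 2
      have h1 := (hsand z.1).1
      have h2 := (hsand z.1).2
      nlinarith [sq_nonneg (eval z.1 pup - fstar z.1),
        mul_nonneg (sub_nonneg.mpr h2) (sub_nonneg.mpr h1)]
    rw [hmapUL] at h1
    linarith
  -- transfer ∫ (phat - plow)^2 from Q to D
  have hmapPL : (∫ z, (eval z.1 phat - eval z.1 plow) ^ 2 ∂Qtrain)
      = ∫ x, (eval x phat - eval x plow) ^ 2 ∂D := by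
    rw [← hmtr]
    exact (integral_map measurable_fst.aemeasurable
      (((hmev phat).sub (hmev plow)).pow_const 2).aestronglyMeasurable).symm
  -- the L² bound on phat - plow
  have hL2 : (∫ x, (eval x phat - eval x plow) ^ 2 ∂D) ≤ 32 * err + 8 * εs := by
    have h := hCG.trans (hGH.trans_eq hintH)
    rw [hmapPL] at h
    rw [hmapPL] at hCG
    nlinarith [hyF4, hFLe]
  -- the disagreement set W on the x-space
  set W : Set (Fin d → ℝ) :=
    {x | fstar x ≠ (if 0 ≤ eval x phat then (1:ℝ) else -1)} with hWdef
  have hWm : MeasurableSet W := by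
    have hsgn : Measurable fun x => (if 0 ≤ eval x phat then (1:ℝ) else -1) :=
      Measurable.ite (measurableSet_le measurable_const (hmev phat))
        measurable_const measurable_const
    have h0 : Measurable fun x => fstar x - (if 0 ≤ eval x phat then (1:ℝ) else -1) :=
      hfsm.sub hsgn
    have : W = (fun x => fstar x - (if 0 ≤ eval x phat then (1:ℝ) else -1)) ⁻¹' ({0}ᶜ) := by
      ext x; simp [hWdef, sub_eq_zero]
    rw [this]
    exact h0 (measurableSet_singleton 0).compl
  -- pointwise: indicator of W is at most 2 (phat-plow)^2 + 2 (pup-plow)^2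
  have hWptw : ∀ x, W.indicator (fun _ => (1:ℝ)) x
      ≤ 2 * (eval x phat - eval x plow) ^ 2 + 2 * (eval x pup - eval x plow) ^ 2 := by
    intro x
    by_cases hx : x ∈ W
    · rw [Set.indicator_of_mem hx]
      have h1 := (hsand x).1
      have h2 := (hsand x).2
      rcases hfs1 x with hF | hF
      · -- fstar x = 1, so the sign is -1, i.e. eval x phat < 0
        have hite : ¬ (0 ≤ eval x phat) := by
          intro h0
          apply hx
          simp [hWdef, hF, if_pos h0]
        have hP : eval x phat < 0 := lt_of_not_ge hite
        have hU : (1:ℝ) ≤ eval x pup := hF ▸ h2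
        have hL : eval x plow ≤ 1 := hF ▸ h1
        nlinarith [sq_nonneg ((eval x plow - eval x phat) - (eval x pup - eval x plow))]
      · -- fstar x = -1, so the sign is 1, i.e. 0 ≤ eval x phat
        have hite : (0 ≤ eval x phat) := by
          by_contra h0
          apply hx
          simp [hWdef, hF, if_neg h0]
        have hL : eval x plow ≤ -1 := hF ▸ h1
        nlinarith
    · rw [Set.indicator_of_notMem hx]
      positivity
  have hDW : (D W).toReal ≤ 2 * (32 * err + 8 * εs) + 2 * εs := by
    have hind : Integrable (W.indicator fun _ => (1:ℝ)) D :=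
      (integrable_const (1:ℝ)).indicator hWm
    have h1 : (∫ x, W.indicator (fun _ => (1:ℝ)) x ∂D)
        ≤ ∫ x, (2 * (eval x phat - eval x plow) ^ 2 + 2 * (eval x pup - eval x plow) ^ 2) ∂D :=
      integral_mono hind ((hIPLD.const_mul 2).add (hIULD.const_mul 2)) hWptw
    have h2 : (∫ x, W.indicator (fun _ => (1:ℝ)) x ∂D) = (D W).toReal := by
      rw [integral_indicator_const (1:ℝ) hWm, smul_eq_mul, mul_one]
      rfl
    have h3 : (∫ x, (2 * (eval x phat - eval x plow) ^ 2
        + 2 * (eval x pup - eval x plow) ^ 2) ∂D)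
        = 2 * (∫ x, (eval x phat - eval x plow) ^ 2 ∂D)
          + 2 * (∫ x, (eval x pup - eval x plow) ^ 2 ∂D) := by
      rw [integral_add (hIPLD.const_mul 2) (hIULD.const_mul 2), integral_const_mul,
        integral_const_mul]
    rw [h2, h3] at h1
    nlinarith [hL2, hUL]
  -- D'(W ∩ Bᶜ) ≤ lam * D W
  have hWB : MeasurableSet (W ∩ Bᶜ) := hWm.inter hB.compl
  have hD'WB : D' (W ∩ Bᶜ) ≤ lam * D W := by
    have hdecomp : D' (W ∩ Bᶜ) = (D'.singularPart D) (W ∩ Bᶜ)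
        + ∫⁻ x in W ∩ Bᶜ, f x ∂D := by
      haveI : D'.HaveLebesgueDecomposition D := Measure.haveLebesgueDecomposition_of_finiteMeasure
      conv_lhs => rw [Measure.haveLebesgueDecomposition_add D' D]
      rw [Measure.add_apply, withDensity_apply _ hWB]
    have hsp0 : (D'.singularPart D) (W ∩ Bᶜ) = 0 := by
      refine le_antisymm ?_ (zero_le)
      refine le_trans (measure_mono ?_) hsp.le
      intro x hx
      have hxB : x ∉ B := hx.2
      by_contra hxs
      exact hxB (Or.inl hxs)
    have hlint : (∫⁻ x in W ∩ Bᶜ, f x ∂D) ≤ lam * D (W ∩ Bᶜ) := by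
      have hb : ∀ x ∈ W ∩ Bᶜ, f x ≤ lam := by
        intro x hx
        have hxB : x ∉ B := hx.2
        exact (lt_of_not_ge (fun hle => hxB (Or.inr hle))).le
      calc (∫⁻ x in W ∩ Bᶜ, f x ∂D) ≤ ∫⁻ _ in W ∩ Bᶜ, lam ∂D := setLIntegral_mono' hWB hb
        _ = lam * D (W ∩ Bᶜ) := setLIntegral_const _ _
    calc D' (W ∩ Bᶜ) = (D'.singularPart D) (W ∩ Bᶜ) + ∫⁻ x in W ∩ Bᶜ, f x ∂D := hdecomp
      _ = ∫⁻ x in W ∩ Bᶜ, f x ∂D := by rw [hsp0, zero_add]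
      _ ≤ lam * D (W ∩ Bᶜ) := hlint
      _ ≤ lam * D W := mul_le_mul_right (measure_mono Set.inter_subset_left) lam
  have hD'WBr : (D' (W ∩ Bᶜ)).toReal ≤ (2 / η) * (D W).toReal := by
    have hne : lam * D W ≠ ⊤ := ENNReal.mul_ne_top (by simp [hlamdef]) (measure_ne_top _ _)
    have h1 := ENNReal.toReal_mono hne hD'WB
    rwa [ENNReal.toReal_mul, hlamdef, ENNReal.toReal_ofReal (by positivity)] at h1
  -- split the bad event
  have hsub : {z : (Fin d → ℝ) × ℝ | z.2 ≠ (if 0 ≤ eval z.1 phat then (1:ℝ) else -1) ∧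
        Bᶜ.indicator (fun _ => (1:ℝ)) z.1 = 1}
      ⊆ {z : (Fin d → ℝ) × ℝ | z.2 ≠ fstar z.1} ∪ (Prod.fst ⁻¹' (W ∩ Bᶜ)) := by
    rintro z ⟨hz1, hz2⟩
    by_cases hzf : z.2 = fstar z.1
    · right
      refine ⟨?_, ?_⟩
      · show fstar z.1 ≠ _
        rw [← hzf]
        exact hz1
      · by_contra hxB
        rw [Set.indicator_of_notMem hxB] at hz2
        exact one_ne_zero hz2.symm
    · left; exact hzf
  have hmeas2 : Qtest (Prod.fst ⁻¹' (W ∩ Bᶜ)) = D' (W ∩ Bᶜ) := by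
    rw [← hmte, Measure.map_apply measurable_fst hWB]
  have hmain : Qtest {z : (Fin d → ℝ) × ℝ | z.2 ≠ (if 0 ≤ eval z.1 phat then (1:ℝ) else -1) ∧
        Bᶜ.indicator (fun _ => (1:ℝ)) z.1 = 1}
      ≤ Qtest {z : (Fin d → ℝ) × ℝ | z.2 ≠ fstar z.1} + D' (W ∩ Bᶜ) := by
    rw [← hmeas2]
    exact (measure_mono hsub).trans (measure_union_le _ _)
  have hfin1 : Qtest {z : (Fin d → ℝ) × ℝ | z.2 ≠ fstar z.1} ≠ ⊤ := measure_ne_top _ _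
  have hfin2 : D' (W ∩ Bᶜ) ≠ ⊤ := measure_ne_top _ _
  have hmainr : (Qtest {z : (Fin d → ℝ) × ℝ | z.2 ≠ (if 0 ≤ eval z.1 phat then (1:ℝ) else -1) ∧
        Bᶜ.indicator (fun _ => (1:ℝ)) z.1 = 1}).toReal
      ≤ (Qtest {z : (Fin d → ℝ) × ℝ | z.2 ≠ fstar z.1}).toReal + (D' (W ∩ Bᶜ)).toReal := by
    have h1 := ENNReal.toReal_mono (ENNReal.add_ne_top.mpr ⟨hfin1, hfin2⟩) hmain
    rwa [ENNReal.toReal_add hfin1 hfin2] at h1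
  -- final arithmetic
  have hfinal : (2 / η) * (D W).toReal ≤ (25600 / η) * err + (7200 / η) * εs := by
    have h1 : (2 / η) * (D W).toReal ≤ (2 / η) * (2 * (32 * err + 8 * εs) + 2 * εs) := by
      refine mul_le_mul_of_nonneg_left hDW (by positivity)
    have h2 : (2 / η) * (2 * (32 * err + 8 * εs) + 2 * εs)
        = (1 / η) * (128 * err + 36 * εs) := by ring
    have h3 : (25600 / η) * err + (7200 / η) * εs
        = (1 / η) * (25600 * err + 7200 * εs) := by ring
    have h4 : (1 / η) * (128 * err + 36 * εs) ≤ (1 / η) * (25600 * err + 7200 * εs) := by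
      refine mul_le_mul_of_nonneg_left (by nlinarith) (by positivity)
    linarith
  calc (Qtest {z : (Fin d → ℝ) × ℝ | z.2 ≠ (if 0 ≤ eval z.1 phat then (1:ℝ) else -1) ∧
        Bᶜ.indicator (fun _ => (1:ℝ)) z.1 = 1}).toReal
      ≤ (Qtest {z : (Fin d → ℝ) × ℝ | z.2 ≠ fstar z.1}).toReal + (D' (W ∩ Bᶜ)).toReal := hmainr
    _ ≤ (Qtest {z : (Fin d → ℝ) × ℝ | z.2 ≠ fstar z.1}).toReal + (2 / η) * (D W).toReal := by
        linarith
    _ ≤ (Qtest {z | z.2 ≠ fstar z.1}).toReal + (25600 / η) * err + (7200 / η) * εs := by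
        linarith
end

section
/- Let X be a measurable space, let Q_test be a probability measure on X × {−1, 1} with X-marginal D'_X, let D be a probability measure on X, and let h : X → {−1, 1} and g : X → {0, 1} be measurable. If Q_test({(x, y) : y ≠ h(x) and g(x) = 1}) ≤ ε' and D({x : g(x) = 0}) ≤ η, then Q_test({(x, y) : y ≠ h(x)}) ≤ ε' + η + d_TV(D, D'_X). -/
open MeasureTheory

theorem stmt12 {X : Type*} [MeasurableSpace X]
    (Qtest : Measure (X × ℝ)) [IsProbabilityMeasure Qtest]
    (hlabels : Qtest {z | z.2 = 1 ∨ z.2 = -1} = 1)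
    (D : Measure X) [IsProbabilityMeasure D]
    (h : X → ℝ) (hh : Measurable h) (hhval : ∀ x, h x = 1 ∨ h x = -1)
    (g : X → ℝ) (hg : Measurable g) (hgval : ∀ x, g x = 0 ∨ g x = 1)
    (ε' η : ℝ)
    (herr : (Qtest {z | z.2 ≠ h z.1 ∧ g z.1 = 1}).toReal ≤ ε')
    (hrej : (D {x | g x = 0}).toReal ≤ η) :
    (Qtest {z | z.2 ≠ h z.1}).toReal ≤ ε' + η + tvDist D (Qtest.map Prod.fst) := by
  set D' := Qtest.map Prod.fst with hD'
  have hD'prob : IsProbabilityMeasure D' := Measure.isProbabilityMeasure_map measurable_fst.aemeasurable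
  have hGmeas : MeasurableSet {x : X | g x = 0} := hg (measurableSet_singleton 0)
  -- split the error set
  have hsub : {z : X × ℝ | z.2 ≠ h z.1} ⊆
      {z | z.2 ≠ h z.1 ∧ g z.1 = 1} ∪ {z | g z.1 = 0} := by
    intro z hz
    rcases hgval z.1 with h0 | h1
    · exact Or.inr h0
    · exact Or.inl ⟨hz, h1⟩
  have hQsplit : Qtest {z | z.2 ≠ h z.1} ≤
      Qtest {z | z.2 ≠ h z.1 ∧ g z.1 = 1} + Qtest {z : X × ℝ | g z.1 = 0} :=
    le_trans (measure_mono hsub) (measure_union_le _ _)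
  have hmap : Qtest {z : X × ℝ | g z.1 = 0} = D' {x | g x = 0} := by
    rw [hD', Measure.map_apply measurable_fst hGmeas]
    rfl
  -- TV bound
  have hbdd : BddAbove (Set.range fun A : {A : Set X // MeasurableSet A} =>
      |(D A.1).toReal - (D' A.1).toReal|) := by
    refine ⟨1, ?_⟩
    rintro _ ⟨A, rfl⟩
    have h1 : (D A.1).toReal ≤ 1 := by
      simpa using ENNReal.toReal_mono (by simp) (prob_le_one (μ := D) (s := A.1))
    have h2 : (D' A.1).toReal ≤ 1 := by
      simpa using ENNReal.toReal_mono (by simp) (prob_le_one (μ := D') (s := A.1))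
    have h3 : (0:ℝ) ≤ (D A.1).toReal := ENNReal.toReal_nonneg
    have h4 : (0:ℝ) ≤ (D' A.1).toReal := ENNReal.toReal_nonneg
    rw [abs_sub_le_iff]; constructor <;> linarith
  have htv : (D' {x | g x = 0}).toReal - (D {x | g x = 0}).toReal ≤ tvDist D D' := by
    have := le_ciSup hbdd ⟨{x | g x = 0}, hGmeas⟩
    have habs : (D' {x | g x = 0}).toReal - (D {x | g x = 0}).toReal ≤
        |(D {x | g x = 0}).toReal - (D' {x | g x = 0}).toReal| := by
      rw [abs_sub_comm]; exact le_abs_self _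
    exact le_trans habs this
  -- finish
  have hfin1 : Qtest {z | z.2 ≠ h z.1 ∧ g z.1 = 1} ≠ ⊤ := measure_ne_top _ _
  have hfin2 : Qtest {z : X × ℝ | g z.1 = 0} ≠ ⊤ := measure_ne_top _ _
  have hmain : (Qtest {z | z.2 ≠ h z.1}).toReal ≤
      (Qtest {z | z.2 ≠ h z.1 ∧ g z.1 = 1}).toReal + (D' {x | g x = 0}).toReal := by
    have := ENNReal.toReal_mono (by simp [ENNReal.add_ne_top, hfin1, hfin2]) hQsplit
    rwa [ENNReal.toReal_add hfin1 hfin2, hmap] at this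
  linarith
end

section
/- Let d, k be positive integers, K > 0, let D' be a probability measure on ℝ^d, and let g : ℝ^d → {0, 1} be measurable such that for every polynomial p in d real variables of degree at most k, ∫ p(x)² g(x) dD'(x) ≤ K · ∫ p(x)² dγ_d(x), where γ_d is the standard Gaussian measure on ℝ^d. Then for every unit vector w ∈ ℝ^d and every τ > 0, D'({x : |w · x| > τ and g(x) = 1}) ≤ K · (2k)! / (2^k · k! · τ^{2k}). -/
open MeasureTheory MvPolynomial

section Stmt14Aux
open ProbabilityTheory Real Finset
open scoped ENNReal NNReal

lemma stmt14_Gamma_half (k : ℕ) :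
    Real.Gamma ((k : ℝ) + 1/2) = Real.sqrt π * (2*k).factorial / (4^k * k.factorial) := by
  induction k with
  | zero => rw [show ((0:ℕ):ℝ) + 1/2 = 1/2 by norm_num, Real.Gamma_one_half_eq]; simp
  | succ n ih =>
      have h : ((n+1 : ℕ) : ℝ) + 1/2 = ((n:ℝ) + 1/2) + 1 := by push_cast; ring
      rw [h, Real.Gamma_add_one (by positivity), ih]
      have h2 : ((2*(n+1)).factorial : ℝ) = (2*n+2) * (2*n+1) * (2*n).factorial := by
        have : 2*(n+1) = (2*n+1) + 1 := by ring
        rw [this, Nat.factorial_succ, Nat.factorial_succ]; push_cast; ring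
      have h3 : ((n+1).factorial : ℝ) = (n+1) * n.factorial := by
        rw [Nat.factorial_succ]; push_cast; ring
      have hf : (n.factorial : ℝ) ≠ 0 := Nat.cast_ne_zero.2 n.factorial_ne_zero
      rw [h2, h3]
      field_simp
      ring


noncomputable def stmt14_gmom (m : ℕ) : ℝ := ∫ x, x ^ m ∂(gaussianReal 0 1)

lemma stmt14_gauss_eq : gaussianReal 0 1 =
    (volume : Measure ℝ).withDensity (fun x => ((gaussianPDFReal 0 1 x).toNNReal : ℝ≥0∞)) := by
  rw [gaussianReal_of_var_ne_zero 0 one_ne_zero]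
  rfl

lemma stmt14_pdf_meas : Measurable (fun x => (gaussianPDFReal 0 1 x).toNNReal) :=
  (measurable_gaussianPDFReal 0 1).real_toNNReal

lemma stmt14_integral_gauss (f : ℝ → ℝ) :
    ∫ x, f x ∂(gaussianReal 0 1) = ∫ x, gaussianPDFReal 0 1 x * f x := by
  rw [stmt14_gauss_eq, integral_withDensity_eq_integral_smul stmt14_pdf_meas]
  congr 1 with x
  rw [NNReal.smul_def, Real.coe_toNNReal _ (gaussianPDFReal_nonneg 0 1 x), smul_eq_mul]

lemma stmt14_pdf_eq (x : ℝ) :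
    gaussianPDFReal 0 1 x = (Real.sqrt (2*π))⁻¹ * Real.exp (-(1/2) * x^2) := by
  simp only [gaussianPDFReal, NNReal.coe_one, mul_one, sub_zero]
  congr 1
  ring

lemma stmt14_integrable_pow (m : ℕ) :
    Integrable (fun x : ℝ => x ^ m) (gaussianReal 0 1) := by
  rw [stmt14_gauss_eq, integrable_withDensity_iff_integrable_smul stmt14_pdf_meas]
  have h : Integrable (fun x : ℝ => (Real.sqrt (2*π))⁻¹ * (x ^ (m:ℝ) * Real.exp (-(1/2) * x^2))) volume :=
    (integrable_rpow_mul_exp_neg_mul_sq (by norm_num : (0:ℝ) < 1/2)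
      (by exact lt_of_lt_of_le neg_one_lt_zero (Nat.cast_nonneg m) : (-1:ℝ) < m)).const_mul _
  refine h.congr (Filter.Eventually.of_forall fun x => ?_)
  show _ = (gaussianPDFReal 0 1 x).toNNReal • x ^ m
  rw [NNReal.smul_def, Real.coe_toNNReal _ (gaussianPDFReal_nonneg 0 1 x), stmt14_pdf_eq,
]
  simp only [Real.rpow_natCast, smul_eq_mul]
  ring


lemma stmt14_even_pow_abs (x : ℝ) (k : ℕ) : |x| ^ (2*k) = x ^ (2*k) := by
  rw [pow_mul, pow_mul, sq_abs]

lemma stmt14_gmom_even (k : ℕ) :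
    stmt14_gmom (2*k) = ((2*k).factorial : ℝ) / (2^k * (k.factorial : ℝ)) := by
  have key : ∫ t in Set.Ioi (0:ℝ), t^(2*k) * Real.exp (-(1/2) * t^2)
      = ((1:ℝ)/2) ^ (-(((2*k : ℕ):ℝ)+1)/2) * (1/2) * Real.Gamma ((((2*k : ℕ):ℝ)+1)/2) := by
    rw [← integral_rpow_mul_exp_neg_mul_rpow (by norm_num : (0:ℝ) < 2)
      (by exact lt_of_lt_of_le neg_one_lt_zero (Nat.cast_nonneg _) : (-1:ℝ) < ((2*k:ℕ):ℝ))
      (by norm_num : (0:ℝ) < 1/2)]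
    refine setIntegral_congr_fun measurableSet_Ioi (fun t _ => ?_)
    rw [Real.rpow_natCast, Real.rpow_two]
  have habs : ∫ x, gaussianPDFReal 0 1 x * x ^ (2*k)
      = (Real.sqrt (2*π))⁻¹ * ∫ x : ℝ, (fun t => t^(2*k) * Real.exp (-(1/2) * t^2)) |x| := by
    rw [← integral_const_mul]
    congr 1 with x
    simp only [stmt14_pdf_eq]
    rw [stmt14_even_pow_abs, sq_abs]
    ring
  rw [stmt14_gmom, stmt14_integral_gauss, habs,
    show (∫ x : ℝ, (fun t => t^(2*k) * Real.exp (-(1/2) * t^2)) |x|)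
      = 2 * ∫ t in Set.Ioi (0:ℝ), t^(2*k) * Real.exp (-(1/2) * t^2) from integral_comp_abs (f := fun t => t^(2*k) * Real.exp (-(1/2) * t^2)), key]
  have hGamma : Real.Gamma ((((2*k : ℕ):ℝ)+1)/2) = Real.sqrt π * (2*k).factorial / (4^k * k.factorial) := by
    rw [← stmt14_Gamma_half k]
    congr 1
    push_cast
    ring
  have hpow : ((1:ℝ)/2) ^ (-(((2*k : ℕ):ℝ)+1)/2) = 2^k * Real.sqrt 2 := by
    rw [one_div, Real.inv_rpow (by norm_num : (0:ℝ) ≤ 2), ← Real.rpow_neg (by norm_num : (0:ℝ) ≤ 2),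
      show -(-(((2*k : ℕ):ℝ)+1)/2) = (k:ℝ) + 1/2 by push_cast; ring]
    rw [Real.rpow_add (by norm_num : (0:ℝ) < 2), Real.rpow_natCast,
      ← Real.sqrt_eq_rpow]
  rw [hGamma, hpow, Real.sqrt_mul (by norm_num : (0:ℝ) ≤ 2)]
  have h2 : Real.sqrt 2 ≠ 0 := by positivity
  have hπ : Real.sqrt π ≠ 0 := by positivity
  have hf : (k.factorial : ℝ) ≠ 0 := Nat.cast_ne_zero.2 k.factorial_ne_zero
  have h4 : (4:ℝ)^k = 2^k * 2^k := by
    rw [show (4:ℝ) = 2*2 by norm_num, mul_pow]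
  rw [h4]
  field_simp


lemma stmt14_gauss_neg :
    Measure.map (fun x : ℝ => -x) (gaussianReal 0 1) = gaussianReal 0 1 := by
  have h := gaussianReal_map_const_mul (μ := 0) (v := 1) (-1)
  have h2 : ((fun x : ℝ => -1 * x)) = (fun x : ℝ => -x) := by funext x; ring
  have h3 : (⟨(-1:ℝ)^2, sq_nonneg _⟩ : ℝ≥0) * 1 = 1 := by
    ext; norm_num
  rw [show ((-1:ℝ) * ·) = (fun x : ℝ => -1 * x) from rfl, h2] at h
  rw [h]
  congr 1
  · simp

lemma stmt14_gmom_odd (m : ℕ) (hm : Odd m) : stmt14_gmom m = 0 := by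
  have h1 : stmt14_gmom m = ∫ x, (-x) ^ m ∂(gaussianReal 0 1) := by
    rw [stmt14_gmom]
    nth_rewrite 1 [← stmt14_gauss_neg]
    rw [integral_map (f := fun x : ℝ => x ^ m) measurable_neg.aemeasurable
      ((measurable_id.pow_const m).aestronglyMeasurable)]
  have h2 : ∫ x, (-x) ^ m ∂(gaussianReal 0 1) = - stmt14_gmom m := by
    rw [stmt14_gmom, ← integral_neg]
    congr 1 with x
    rw [hm.neg_pow]
  rw [h2] at h1
  linarith


lemma stmt14_coef (k i : ℕ) (h : i ≤ k) :
    stmt14_gmom (2*i) * stmt14_gmom (2*(k-i)) * ((2*k).choose (2*i) : ℝ)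
      = stmt14_gmom (2*k) * (k.choose i : ℝ) := by
  rw [stmt14_gmom_even, stmt14_gmom_even, stmt14_gmom_even,
    Nat.cast_choose ℝ (by omega : 2*i ≤ 2*k), Nat.cast_choose ℝ h,
    show 2*k - 2*i = 2*(k-i) by omega]
  have hp : (2:ℝ)^k = 2^i * 2^(k-i) := by rw [← pow_add]; congr 1; omega
  have f1 : ((2*i).factorial : ℝ) ≠ 0 := Nat.cast_ne_zero.2 (Nat.factorial_ne_zero _)
  have f2 : ((2*(k-i)).factorial : ℝ) ≠ 0 := Nat.cast_ne_zero.2 (Nat.factorial_ne_zero _)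
  have f3 : ((i).factorial : ℝ) ≠ 0 := Nat.cast_ne_zero.2 (Nat.factorial_ne_zero _)
  have f4 : ((k-i).factorial : ℝ) ≠ 0 := Nat.cast_ne_zero.2 (Nat.factorial_ne_zero _)
  have f5 : ((k).factorial : ℝ) ≠ 0 := Nat.cast_ne_zero.2 (Nat.factorial_ne_zero _)
  rw [hp]
  field_simp

lemma stmt14_sum_id (m : ℕ) (w0 s : ℝ) :
    ∑ j ∈ range (m+1), (stmt14_gmom j * stmt14_gmom (m-j) * (m.choose j : ℝ))
        * (w0^j * s^((m-j)/2))
      = stmt14_gmom m * (w0^2 + s)^(m/2) := by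
  rcases Nat.even_or_odd m with hm | hm
  · obtain ⟨k, hk⟩ := hm
    subst hk
    have hmm : k + k = 2 * k := by ring
    rw [hmm]
    have hfilter : (range (2*k+1)).filter (fun j => Even j) = (range (k+1)).image (fun i => 2*i) := by
      ext j
      simp only [Finset.mem_filter, Finset.mem_range, Finset.mem_image, Nat.even_iff]
      constructor
      · rintro ⟨h1, h2⟩; exact ⟨j/2, by omega, by omega⟩
      · rintro ⟨i, hi, rfl⟩; omega
    rw [← Finset.sum_filter_of_ne (p := fun j => Even j) ?_]
    · rw [hfilter, Finset.sum_image (fun a _ b _ hab => by omega)]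
      have : ∀ i ∈ range (k+1),
          (stmt14_gmom (2*i) * stmt14_gmom (2*k - 2*i) * ((2*k).choose (2*i) : ℝ))
            * (w0^(2*i) * s^((2*k - 2*i)/2))
          = stmt14_gmom (2*k) * ((k.choose i : ℝ) * ((w0^2)^i * s^(k-i))) := by
        intro i hi
        have hik : i ≤ k := by simp at hi; omega
        rw [show 2*k - 2*i = 2*(k-i) by omega, show (2*(k-i))/2 = k - i by omega,
          ← pow_mul]
        linear_combination (w0^(2*i) * s^(k-i)) * stmt14_coef k i hik
      rw [Finset.sum_congr rfl this, ← Finset.mul_sum]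
      congr 1
      rw [show (2*k)/2 = k by omega, add_pow]
      exact (Finset.sum_congr rfl (fun i _ => by ring)).symm
    · intro j hj hne
      by_contra hodd
      rw [Nat.not_even_iff_odd] at hodd
      exact hne (by rw [stmt14_gmom_odd j hodd]; ring)
  · rw [stmt14_gmom_odd m hm, zero_mul]
    refine Finset.sum_eq_zero (fun j hj => ?_)
    rcases Nat.even_or_odd j with hj2 | hj2
    · have : Odd (m - j) := by
        simp only [Finset.mem_range] at hj
        rcases hm with ⟨a, ha⟩; rcases hj2 with ⟨b, hb⟩
        exact ⟨a - b, by omega⟩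
      rw [stmt14_gmom_odd _ this]; ring
    · rw [stmt14_gmom_odd j hj2]; ring


lemma stmt14_gmom_zero : stmt14_gmom 0 = 1 := by
  simp [stmt14_gmom]

lemma stmt14_key (d : ℕ) : ∀ (w : Fin d → ℝ) (m : ℕ),
    Integrable (fun x : Fin d → ℝ => (∑ i, w i * x i) ^ m)
      (Measure.pi fun _ : Fin d => gaussianReal 0 1) ∧
    ∫ x, (∑ i, w i * x i) ^ m ∂(Measure.pi fun _ : Fin d => gaussianReal 0 1)
      = stmt14_gmom m * (∑ i, (w i)^2) ^ (m/2) := by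
  induction d with
  | zero =>
      intro w m
      constructor
      · simp only [Finset.univ_eq_empty, Finset.sum_empty]
        exact integrable_const _
      · simp only [Finset.univ_eq_empty, Finset.sum_empty, integral_const, measure_univ, probReal_univ,
          ENNReal.toReal_one, smul_eq_mul, one_mul]
        rcases Nat.eq_zero_or_pos m with h0 | h0
        · subst h0; simp [stmt14_gmom_zero]
        rcases Nat.lt_or_ge m 2 with h1 | h1
        · have : m = 1 := by omega
          subst this
          simp [stmt14_gmom_odd 1 ⟨0, by norm_num⟩]
        · rw [zero_pow (by omega), zero_pow (by omega), mul_zero]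
  | succ d ih =>
      intro w m
      set μ1 := gaussianReal 0 1 with hμ1
      set Γd := Measure.pi (fun _ : Fin d => μ1) with hΓd
      have mp := measurePreserving_piFinSuccAbove (fun _ : Fin (d+1) => μ1) 0
      set e := MeasurableEquiv.piFinSuccAbove (fun _ : Fin (d+1) => ℝ) 0 with he
      set g : ℝ × (Fin d → ℝ) → ℝ :=
        fun z => (w 0 * z.1 + ∑ j, w (Fin.succ j) * z.2 j) ^ m with hg
      have hcomp : ∀ x : Fin (d+1) → ℝ, g (e x) = (∑ i, w i * x i) ^ m := by
        intro x
        simp only [hg, he, MeasurableEquiv.piFinSuccAbove_apply, Fin.insertNthEquiv,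
          Equiv.coe_fn_symm_mk, Fin.zero_succAbove, Fin.removeNth, Fin.succAbove_zero]
        rw [Fin.sum_univ_succ]
      set S : ℝ := ∑ j, (w (Fin.succ j))^2 with hS
      -- expanded form of g
      have hgexp : g = fun z => ∑ j ∈ range (m+1),
          ((w 0 * z.1)^j) * ((∑ i, w (Fin.succ i) * z.2 i)^(m-j) * (m.choose j : ℝ)) := by
        funext z
        show (w 0 * z.1 + ∑ j, w (Fin.succ j) * z.2 j) ^ m = _
        rw [add_pow]
        exact Finset.sum_congr rfl (fun j _ => by ring)
      have hterm : ∀ j, Integrable (fun z : ℝ × (Fin d → ℝ) =>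
          ((w 0 * z.1)^j) * ((∑ i, w (Fin.succ i) * z.2 i)^(m-j) * (m.choose j : ℝ)))
          (μ1.prod Γd) := by
        intro j
        have h1 : Integrable (fun t : ℝ => (w 0 * t)^j) μ1 := by
          have := (stmt14_integrable_pow j).const_mul ((w 0)^j)
          refine this.congr (Filter.Eventually.of_forall fun t => ?_)
          simp only [mul_pow]
        have h2 : Integrable (fun y : Fin d → ℝ =>
            (∑ i, w (Fin.succ i) * y i)^(m-j) * (m.choose j : ℝ)) Γd :=
          ((ih (fun i => w (Fin.succ i)) (m-j)).1).mul_const _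
        exact h1.mul_prod h2
      have hgint : Integrable g (μ1.prod Γd) := by
        rw [hgexp]
        exact integrable_finset_sum _ (fun j _ => hterm j)
      constructor
      · have := (MeasurePreserving.integrable_comp_emb mp e.measurableEmbedding (g := g)).2 hgint
        refine this.congr (Filter.Eventually.of_forall fun x => ?_)
        exact hcomp x
      · have h1 : ∫ x, (∑ i, w i * x i) ^ m ∂(Measure.pi fun _ : Fin (d+1) => μ1)
            = ∫ z, g z ∂(μ1.prod Γd) := by
          rw [← mp.integral_comp e.measurableEmbedding g]
          exact integral_congr_ae (Filter.Eventually.of_forall fun x => (hcomp x).symm)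
        rw [h1, hgexp, integral_finset_sum _ (fun j _ => hterm j)]
        have h2 : ∀ j ∈ range (m+1),
            ∫ z : ℝ × (Fin d → ℝ),
              ((w 0 * z.1)^j) * ((∑ i, w (Fin.succ i) * z.2 i)^(m-j) * (m.choose j : ℝ))
              ∂(μ1.prod Γd)
            = (stmt14_gmom j * stmt14_gmom (m-j) * (m.choose j : ℝ))
                * ((w 0)^j * S^((m-j)/2)) := by
          intro j _
          rw [integral_prod_mul (f := fun t : ℝ => (w 0 * t)^j)
            (g := fun y : Fin d → ℝ => (∑ i, w (Fin.succ i) * y i)^(m-j) * (m.choose j : ℝ))]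
          rw [integral_mul_const, (ih (fun i => w (Fin.succ i)) (m-j)).2]
          have : ∫ t, (w 0 * t)^j ∂μ1 = (w 0)^j * stmt14_gmom j := by
            rw [hμ1, stmt14_gmom, ← integral_const_mul]
            congr 1 with t
            rw [mul_pow]
          rw [this, ← hS]
          ring
        rw [Finset.sum_congr rfl h2, stmt14_sum_id m (w 0) S]
        congr 1
        rw [Fin.sum_univ_succ]

end Stmt14Aux

theorem stmt14 (d k : ℕ) (hd : 0 < d) (hk : 0 < k) (K : ℝ) (hK : 0 < K)
    (D' : Measure (Fin d → ℝ)) [IsProbabilityMeasure D']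
    (g : (Fin d → ℝ) → ℝ) (hg : Measurable g) (hgval : ∀ x, g x = 0 ∨ g x = 1)
    (hspec : ∀ p : MvPolynomial (Fin d) ℝ, p.totalDegree ≤ k →
      (∫⁻ x, ENNReal.ofReal ((eval x p) ^ 2 * g x) ∂D') ≤
        ENNReal.ofReal (K * ∫ x, (eval x p) ^ 2
          ∂(Measure.pi fun _ : Fin d => ProbabilityTheory.gaussianReal 0 1))) :
    ∀ w : Fin d → ℝ, (∑ i, (w i) ^ 2) = 1 → ∀ τ : ℝ, 0 < τ →
      (D' {x | τ < |∑ i, w i * x i| ∧ g x = 1}).toReal ≤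
        K * (Nat.factorial (2 * k) : ℝ) /
          (2 ^ k * (Nat.factorial k : ℝ) * τ ^ (2 * k)) := by
  intro w hw τ hτ
  set M : ℝ := ((2*k).factorial : ℝ) / (2^k * (k.factorial : ℝ)) with hM
  set p : MvPolynomial (Fin d) ℝ := (∑ i, C (w i) * X i) ^ k with hp
  have hdeg : p.totalDegree ≤ k := by
    rw [hp]
    calc ((∑ i, C (w i) * X i) ^ k).totalDegree
        ≤ k * (∑ i : Fin d, C (w i) * X i).totalDegree := totalDegree_pow _ _
      _ ≤ k * 1 := by
          refine Nat.mul_le_mul_left k ?_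
          refine (totalDegree_finset_sum _ _).trans ?_
          refine Finset.sup_le (fun i _ => ?_)
          calc (C (w i) * X i).totalDegree ≤ (C (w i)).totalDegree + (X i).totalDegree :=
                totalDegree_mul _ _
            _ ≤ 1 := by rw [totalDegree_C, totalDegree_X]
      _ = k := mul_one k
  have heval : ∀ x : Fin d → ℝ, eval x p = (∑ i, w i * x i) ^ k := by
    intro x
    rw [hp]
    simp [eval_pow, map_sum]
  have hevalsq : ∀ x : Fin d → ℝ, (eval x p) ^ 2 = (∑ i, w i * x i) ^ (2*k) := by
    intro x
    rw [heval, ← pow_mul, mul_comm]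
  have hI : ∫ x, (eval x p) ^ 2
      ∂(Measure.pi fun _ : Fin d => ProbabilityTheory.gaussianReal 0 1) = M := by
    have h1 : ∫ x, (eval x p) ^ 2
        ∂(Measure.pi fun _ : Fin d => ProbabilityTheory.gaussianReal 0 1)
        = ∫ x, (∑ i, w i * x i) ^ (2*k)
        ∂(Measure.pi fun _ : Fin d => ProbabilityTheory.gaussianReal 0 1) :=
      integral_congr_ae (Filter.Eventually.of_forall fun x => hevalsq x)
    rw [h1, (stmt14_key d w (2*k)).2, hw, one_pow, mul_one, stmt14_gmom_even]
  have hspec' := hspec p hdeg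
  rw [hI] at hspec'
  set S : Set (Fin d → ℝ) := {x | τ < |∑ i, w i * x i| ∧ g x = 1} with hS
  have hsum : Measurable (fun x : Fin d → ℝ => ∑ i, w i * x i) :=
    Finset.measurable_sum _ (fun i _ => (measurable_pi_apply i).const_mul _)
  have hSmeas : MeasurableSet S := by
    rw [hS, Set.setOf_and]
    exact (measurableSet_lt measurable_const hsum.abs).inter (hg (measurableSet_singleton 1))
  have hlow : ENNReal.ofReal (τ^(2*k)) * D' S
      ≤ ∫⁻ x, ENNReal.ofReal ((eval x p) ^ 2 * g x) ∂D' := by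
    rw [← lintegral_indicator_const hSmeas (ENNReal.ofReal (τ^(2*k)))]
    refine lintegral_mono (fun x => ?_)
    by_cases hx : x ∈ S
    · rw [Set.indicator_of_mem hx]
      obtain ⟨hx1, hx2⟩ := hx
      refine ENNReal.ofReal_le_ofReal ?_
      rw [hevalsq, hx2, mul_one]
      calc τ^(2*k) ≤ |∑ i, w i * x i| ^ (2*k) :=
            pow_le_pow_left₀ hτ.le hx1.le _
        _ = (∑ i, w i * x i) ^ (2*k) := stmt14_even_pow_abs _ _
    · rw [Set.indicator_of_notMem hx]
      exact bot_le
  have hchain : ENNReal.ofReal (τ^(2*k)) * D' S ≤ ENNReal.ofReal (K * M) :=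
    hlow.trans hspec'
  have hM0 : 0 ≤ M := by
    rw [hM]; positivity
  have htoReal : τ^(2*k) * (D' S).toReal ≤ K * M := by
    have h2 := (ENNReal.toReal_le_toReal
      (ENNReal.mul_ne_top ENNReal.ofReal_ne_top (measure_ne_top D' S))
      ENNReal.ofReal_ne_top).2 hchain
    rwa [ENNReal.toReal_mul, ENNReal.toReal_ofReal (by positivity),
      ENNReal.toReal_ofReal (by positivity)] at h2
  have hfin : (D' S).toReal ≤ K * M / τ^(2*k) := by
    rw [le_div_iff₀ (by positivity : (0:ℝ) < τ^(2*k))]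
    linarith
  refine hfin.trans_eq ?_
  rw [hM]
  have h2k : (2:ℝ)^k ≠ 0 := by positivity
  have hfk : ((k.factorial : ℝ)) ≠ 0 := Nat.cast_ne_zero.2 k.factorial_ne_zero
  have hτk : τ^(2*k) ≠ 0 := by positivity
  field_simp
end

section
/- Let d, k be positive integers, K > 0, ρ ≥ 0, and ε_s ≥ 0. Let D and D' be probability measures on ℝ^d such that every polynomial in d real variables of degree at most k is square-integrable with respect to D, and let g : ℝ^d → {0, 1} be measurable with ∫ p(x)² g(x) dD'(x) ≤ K · ∫ p(x)² dD(x) for every polynomial p of degree at most k, and with D'({x : g(x) = 0}) ≤ ρ. Let Q_train and Q_test be probability measures on ℝ^d × {−1, 1} with ℝ^d-marginals D and D' respectively, let f* : ℝ^d → {−1, 1} be measurable, let p_low, p_up be polynomials of degree at most k with p_low ≤ f* ≤ p_up pointwise and ∫ (p_up − p_low)² dD ≤ ε_s, and let p̂ be a polynomial of degree at most k with ∫ (y − p̂(x))² dQ_train ≤ ∫ (y − p_low(x))² dQ_train. Then Q_test({(x, y) : y ≠ sign(p̂(x))}) ≤ ρ + Q_test({(x, y) : y ≠ f*(x)}) +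 64K · Q_train({(x, y) : y ≠ f*(x)}) + 18K · ε_s. -/
open MeasureTheory MvPolynomial

set_option maxHeartbeats 1600000 in
theorem stmt15 (d k : ℕ) (hd : 0 < d) (hk : 0 < k)
    (K : ℝ) (hK : 0 < K) (ρ : ℝ) (hρ : 0 ≤ ρ) (εs : ℝ) (hεs : 0 ≤ εs)
    (D D' : Measure (Fin d → ℝ)) [IsProbabilityMeasure D] [IsProbabilityMeasure D']
    (hInt : ∀ p : MvPolynomial (Fin d) ℝ, p.totalDegree ≤ k →
      Integrable (fun x => (eval x p) ^ 2) D)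
    (g : (Fin d → ℝ) → ℝ) (hg : Measurable g) (hgval : ∀ x, g x = 0 ∨ g x = 1)
    (hspec : ∀ p : MvPolynomial (Fin d) ℝ, p.totalDegree ≤ k →
      (∫⁻ x, ENNReal.ofReal ((eval x p) ^ 2 * g x) ∂D') ≤
        ENNReal.ofReal (K * ∫ x, (eval x p) ^ 2 ∂D))
    (hrej : (D' {x | g x = 0}).toReal ≤ ρ)
    (Qtrain Qtest : Measure ((Fin d → ℝ) × ℝ))
    [IsProbabilityMeasure Qtrain] [IsProbabilityMeasure Qtest]
    (hQtrainlabels : Qtrain {z | z.2 = 1 ∨ z.2 = -1} = 1)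
    (hQtestlabels : Qtest {z | z.2 = 1 ∨ z.2 = -1} = 1)
    (hQtrainmarg : Qtrain.map Prod.fst = D) (hQtestmarg : Qtest.map Prod.fst = D')
    (fstar : (Fin d → ℝ) → ℝ) (hfstar : Measurable fstar)
    (hfval : ∀ x, fstar x = 1 ∨ fstar x = -1)
    (plow pup : MvPolynomial (Fin d) ℝ)
    (hplowdeg : plow.totalDegree ≤ k) (hpupdeg : pup.totalDegree ≤ k)
    (hsand : ∀ x, eval x plow ≤ fstar x ∧ fstar x ≤ eval x pup)
    (hgap : (∫ x, (eval x pup - eval x plow) ^ 2 ∂D) ≤ εs)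
    (phat : MvPolynomial (Fin d) ℝ) (hphatdeg : phat.totalDegree ≤ k)
    (hERM : (∫ z, (z.2 - eval z.1 phat) ^ 2 ∂Qtrain) ≤
      ∫ z, (z.2 - eval z.1 plow) ^ 2 ∂Qtrain)
    (h : (Fin d → ℝ) → ℝ)
    (hdef : ∀ x, h x = if 0 ≤ eval x phat then 1 else -1) :
    (Qtest {z | z.2 ≠ h z.1}).toReal ≤
      ρ + (Qtest {z | z.2 ≠ fstar z.1}).toReal +
        64 * K * (Qtrain {z | z.2 ≠ fstar z.1}).toReal + 18 * K * εs := by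
  have hmeas : ∀ p : MvPolynomial (Fin d) ℝ, Measurable fun x => eval x p :=
    fun p => (MvPolynomial.continuous_eval p).measurable
  have hh : Measurable h := by
    have hhe : h = fun x => if 0 ≤ eval x phat then 1 else -1 := funext hdef
    rw [hhe]
    exact Measurable.ite (measurableSet_le measurable_const (hmeas phat))
      measurable_const measurable_const
  have hdeg1 : (pup - plow).totalDegree ≤ k :=
    (totalDegree_sub _ _).trans (max_le hpupdeg hplowdeg)
  have hdeg2 : (plow - phat).totalDegree ≤ k :=
    (totalDegree_sub _ _).trans (max_le hplowdeg hphatdeg)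
  -- a.e. labels on train
  have haetrain : ∀ᵐ z ∂Qtrain, z.2 = 1 ∨ z.2 = -1 := by
    have hset : MeasurableSet {z : (Fin d → ℝ) × ℝ | z.2 = 1 ∨ z.2 = -1} :=
      (measurable_snd (measurableSet_singleton 1)).union
        (measurable_snd (measurableSet_singleton (-1)))
    have : Qtrain {z : (Fin d → ℝ) × ℝ | z.2 = 1 ∨ z.2 = -1}ᶜ = 0 :=
      (prob_compl_eq_zero_iff hset).2 hQtrainlabels
    exact (ae_iff.2 (by simpa [Set.compl_setOf] using this))
  -- integrability helpers
  have hIntQ : ∀ p : MvPolynomial (Fin d) ℝ, p.totalDegree ≤ k →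
      Integrable (fun z : (Fin d → ℝ) × ℝ => (eval z.1 p) ^ 2) Qtrain := by
    intro p hp
    have h1 : Integrable (fun x => (eval x p) ^ 2) (Qtrain.map Prod.fst) := by
      rw [hQtrainmarg]; exact hInt p hp
    exact h1.comp_measurable measurable_fst
  have hIntY : ∀ p : MvPolynomial (Fin d) ℝ, p.totalDegree ≤ k →
      Integrable (fun z : (Fin d → ℝ) × ℝ => (z.2 - eval z.1 p) ^ 2) Qtrain := by
    intro p hp
    have hb : Integrable (fun z : (Fin d → ℝ) × ℝ => 2 + 2 * (eval z.1 p) ^ 2) Qtrain :=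
      (integrable_const 2).add ((hIntQ p hp).const_mul 2)
    refine hb.mono' ?_ ?_
    · exact ((measurable_snd.sub ((hmeas p).comp measurable_fst)).pow_const 2).aestronglyMeasurable
    · filter_upwards [haetrain] with z hz
      have h2 : z.2 ^ 2 = 1 := by rcases hz with h' | h' <;> rw [h'] <;> norm_num
      rw [Real.norm_eq_abs, abs_of_nonneg (sq_nonneg _)]
      nlinarith [sq_nonneg (z.2 + eval z.1 p)]
  -- marginal transfer for integrals of polynomials
  have hmapint : ∀ p : MvPolynomial (Fin d) ℝ,
      (∫ z : (Fin d → ℝ) × ℝ, (eval z.1 p) ^ 2 ∂Qtrain) = ∫ x, (eval x p) ^ 2 ∂D := by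
    intro p
    rw [← hQtrainmarg,
      integral_map measurable_fst.aemeasurable (((hmeas p).pow_const 2).aestronglyMeasurable)]
  -- the error set on train and its integral representation
  set S : Set ((Fin d → ℝ) × ℝ) := {z | z.2 ≠ fstar z.1} with hSdef
  have hSmeas : MeasurableSet S := by
    have : MeasurableSet {z : (Fin d → ℝ) × ℝ | z.2 = fstar z.1} :=
      measurableSet_eq_fun measurable_snd (hfstar.comp measurable_fst)
    simpa [hSdef, Set.compl_setOf] using this.compl
  set et : ℝ := (Qtrain S).toReal with hetdef
  have het0 : 0 ≤ et := ENNReal.toReal_nonneg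
  have hae4 : (fun z : (Fin d → ℝ) × ℝ => (z.2 - fstar z.1) ^ 2)
      =ᵐ[Qtrain] S.indicator (fun _ => (4 : ℝ)) := by
    filter_upwards [haetrain] with z hz
    by_cases hzf : z.2 = fstar z.1
    · have : z ∉ S := by simp [hSdef, hzf]
      simp [Set.indicator_of_notMem this, hzf]
    · have : z ∈ S := hzf
      rw [Set.indicator_of_mem this]
      rcases hz with h1 | h1 <;> rcases hfval z.1 with h2 | h2 <;>
        first
        | (exact absurd (h1.trans h2.symm) hzf)
        | (rw [h1, h2]; norm_num)
  have hIntF : Integrable (fun z : (Fin d → ℝ) × ℝ => (z.2 - fstar z.1) ^ 2) Qtrain :=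
    ((integrable_const (4 : ℝ)).indicator hSmeas).congr hae4.symm
  have hintF4 : (∫ z : (Fin d → ℝ) × ℝ, (z.2 - fstar z.1) ^ 2 ∂Qtrain) = 4 * et := by
    rw [integral_congr_ae hae4, integral_indicator_const _ hSmeas]
    simp [hetdef, mul_comm, measureReal_def]
  -- I1 and its bound
  set I1 : ℝ := ∫ x, (eval x pup - eval x plow) ^ 2 ∂D with hI1def
  have hI1nn : 0 ≤ I1 := integral_nonneg fun x => sq_nonneg _
  have hI1Q : (∫ z : (Fin d → ℝ) × ℝ, (eval z.1 pup - eval z.1 plow) ^ 2 ∂Qtrain) = I1 := by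
    have := hmapint (pup - plow)
    simpa [map_sub] using this
  have hIntQ1 : Integrable
      (fun z : (Fin d → ℝ) × ℝ => (eval z.1 pup - eval z.1 plow) ^ 2) Qtrain := by
    have := hIntQ (pup - plow) hdeg1
    simpa [map_sub] using this
  -- A := ∫ (y - plow)² dQtrain ≤ 8 et + 2 εs
  set A : ℝ := ∫ z : (Fin d → ℝ) × ℝ, (z.2 - eval z.1 plow) ^ 2 ∂Qtrain with hAdef
  have hA : A ≤ 8 * et + 2 * εs := by
    have hmono : A ≤ ∫ z : (Fin d → ℝ) × ℝ,
        (2 * (z.2 - fstar z.1) ^ 2 + 2 * (eval z.1 pup - eval z.1 plow) ^ 2) ∂Qtrain := by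
      refine integral_mono (hIntY plow hplowdeg) ((hIntF.const_mul 2).add (hIntQ1.const_mul 2)) ?_
      intro z
      obtain ⟨hs1, hs2⟩ := hsand z.1
      dsimp only
      nlinarith [sq_nonneg (z.2 - fstar z.1 - (fstar z.1 - eval z.1 plow)),
        sq_nonneg (eval z.1 pup - fstar z.1),
        mul_nonneg (sub_nonneg.2 hs2) (sub_nonneg.2 hs1)]
    rw [integral_add (hIntF.const_mul 2) (hIntQ1.const_mul 2),
      integral_const_mul, integral_const_mul, hintF4, hI1Q] at hmono
    linarith [hgap]
  -- I2 := ∫ (plow - phat)² dD ≤ 4 A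
  set I2 : ℝ := ∫ x, (eval x plow - eval x phat) ^ 2 ∂D with hI2def
  have hI2nn : 0 ≤ I2 := integral_nonneg fun x => sq_nonneg _
  have hI2 : I2 ≤ 32 * et + 8 * εs := by
    have hI2Q : I2 = ∫ z : (Fin d → ℝ) × ℝ, (eval z.1 plow - eval z.1 phat) ^ 2 ∂Qtrain := by
      have := hmapint (plow - phat)
      simp only [map_sub] at this
      rw [hI2def, ← this]
    have hIntQ2 : Integrable
        (fun z : (Fin d → ℝ) × ℝ => (eval z.1 plow - eval z.1 phat) ^ 2) Qtrain := by
      have := hIntQ (plow - phat) hdeg2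
      simpa [map_sub] using this
    have hmono : I2 ≤ ∫ z : (Fin d → ℝ) × ℝ,
        (2 * (z.2 - eval z.1 phat) ^ 2 + 2 * (z.2 - eval z.1 plow) ^ 2) ∂Qtrain := by
      rw [hI2Q]
      refine integral_mono hIntQ2
        (((hIntY phat hphatdeg).const_mul 2).add ((hIntY plow hplowdeg).const_mul 2)) ?_
      intro z
      dsimp only
      nlinarith [sq_nonneg (z.2 - eval z.1 phat + (z.2 - eval z.1 plow))]
    rw [integral_add ((hIntY phat hphatdeg).const_mul 2) ((hIntY plow hplowdeg).const_mul 2),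
      integral_const_mul, integral_const_mul] at hmono
    have := hERM
    linarith
  -- test side
  set T : Set (Fin d → ℝ) := {x | fstar x ≠ h x ∧ g x = 1} with hTdef
  have hTmeas : MeasurableSet T := by
    have h1 : MeasurableSet {x : Fin d → ℝ | fstar x = h x} := measurableSet_eq_fun hfstar hh
    have h2 : MeasurableSet {x : Fin d → ℝ | g x = 1} := hg (measurableSet_singleton 1)
    have : T = {x : Fin d → ℝ | fstar x = h x}ᶜ ∩ {x : Fin d → ℝ | g x = 1} := by
      ext x; simp [hTdef, Set.compl_setOf, and_comm]
    rw [this]; exact h1.compl.inter h2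
  -- key pointwise bound used on the test distribution
  have hkey : ∀ x, (T.indicator (1 : (Fin d → ℝ) → ENNReal)) x ≤
      ENNReal.ofReal (2 * ((eval x (pup - plow)) ^ 2 * g x)) +
        ENNReal.ofReal (2 * ((eval x (plow - phat)) ^ 2 * g x)) := by
    intro x
    by_cases hx : x ∈ T
    · rw [Set.indicator_of_mem hx]
      obtain ⟨hfh, hg1⟩ := hx
      have hsq1 : 1 ≤ (fstar x - eval x phat) ^ 2 := by
        rw [hdef x] at hfh
        by_cases hp : 0 ≤ eval x phat
        · rw [if_pos hp] at hfh
          have h1 : fstar x = -1 := (hfval x).resolve_left hfh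
          rw [h1]; nlinarith
        · rw [if_neg hp] at hfh
          have h1 : fstar x = 1 := (hfval x).resolve_right hfh
          push_neg at hp
          rw [h1]; nlinarith
      obtain ⟨hs1, hs2⟩ := hsand x
      rw [← ENNReal.ofReal_add (by positivity) (by positivity)]
      refine ENNReal.one_le_ofReal.2 ?_
      simp only [map_sub, hg1, mul_one]
      nlinarith [hsq1, sq_nonneg (eval x pup - fstar x),
        mul_nonneg (sub_nonneg.2 hs2) (sub_nonneg.2 hs1),
        sq_nonneg (fstar x - eval x plow - (eval x plow - eval x phat))]
    · rw [Set.indicator_of_notMem hx]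
      exact zero_le
  have hDT : D' T ≤ ENNReal.ofReal (2 * (K * I1)) + ENNReal.ofReal (2 * (K * I2)) := by
    have hstep1 : D' T ≤
        (∫⁻ x, ENNReal.ofReal (2 * ((eval x (pup - plow)) ^ 2 * g x)) ∂D') +
          ∫⁻ x, ENNReal.ofReal (2 * ((eval x (plow - phat)) ^ 2 * g x)) ∂D' := by
      rw [← lintegral_indicator_one hTmeas]
      calc (∫⁻ x, T.indicator 1 x ∂D') ≤
          ∫⁻ x, (ENNReal.ofReal (2 * ((eval x (pup - plow)) ^ 2 * g x)) +
            ENNReal.ofReal (2 * ((eval x (plow - phat)) ^ 2 * g x))) ∂D' :=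
            lintegral_mono hkey
        _ = _ := lintegral_add_left
            (((((hmeas (pup - plow)).pow_const 2).mul hg).const_mul 2).ennreal_ofReal) _
    have hconst : ∀ q : MvPolynomial (Fin d) ℝ, q.totalDegree ≤ k →
        (∫⁻ x, ENNReal.ofReal (2 * ((eval x q) ^ 2 * g x)) ∂D') ≤
          ENNReal.ofReal (2 * (K * ∫ x, (eval x q) ^ 2 ∂D)) := by
      intro q hq
      have h2 : ∀ x, ENNReal.ofReal (2 * ((eval x q) ^ 2 * g x)) =
          2 * ENNReal.ofReal ((eval x q) ^ 2 * g x) := by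
        intro x
        rw [ENNReal.ofReal_mul (by norm_num : (0:ℝ) ≤ 2)]
        norm_num
      simp_rw [h2]
      rw [lintegral_const_mul (f := fun x => ENNReal.ofReal ((eval x q) ^ 2 * g x)) 2 ((((hmeas q).pow_const 2).mul hg).ennreal_ofReal)]
      calc 2 * ∫⁻ x, ENNReal.ofReal ((eval x q) ^ 2 * g x) ∂D' ≤
          2 * ENNReal.ofReal (K * ∫ x, (eval x q) ^ 2 ∂D) := by
            exact mul_le_mul_right (hspec q hq) 2
        _ = ENNReal.ofReal (2 * (K * ∫ x, (eval x q) ^ 2 ∂D)) := by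
            rw [ENNReal.ofReal_mul (by norm_num : (0:ℝ) ≤ 2)]; norm_num
    have hb1 := hconst (pup - plow) hdeg1
    have hb2 := hconst (plow - phat) hdeg2
    have he1 : (∫ x, (eval x (pup - plow)) ^ 2 ∂D) = I1 := by simp [hI1def, map_sub]
    have he2 : (∫ x, (eval x (plow - phat)) ^ 2 ∂D) = I2 := by simp [hI2def, map_sub]
    rw [he1] at hb1; rw [he2] at hb2
    exact hstep1.trans (add_le_add hb1 hb2)
  have hDTr : (D' T).toReal ≤ 2 * (K * I1) + 2 * (K * I2) := by
    have hne : ENNReal.ofReal (2 * (K * I1)) + ENNReal.ofReal (2 * (K * I2)) ≠ ⊤ := by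
      exact ENNReal.add_ne_top.2 ⟨ENNReal.ofReal_ne_top, ENNReal.ofReal_ne_top⟩
    calc (D' T).toReal ≤
        (ENNReal.ofReal (2 * (K * I1)) + ENNReal.ofReal (2 * (K * I2))).toReal :=
          ENNReal.toReal_mono hne hDT
      _ = 2 * (K * I1) + 2 * (K * I2) := by
          rw [ENNReal.toReal_add ENNReal.ofReal_ne_top ENNReal.ofReal_ne_top, ENNReal.toReal_ofReal (by positivity),
            ENNReal.toReal_ofReal (by positivity)]
  -- decompose the test error
  set A0 : Set ((Fin d → ℝ) × ℝ) := {z | g z.1 = 0} with hA0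
  set B0 : Set ((Fin d → ℝ) × ℝ) := {z | z.2 ≠ fstar z.1} with hB0
  set C0 : Set ((Fin d → ℝ) × ℝ) := {z | fstar z.1 ≠ h z.1 ∧ g z.1 = 1} with hC0
  have hsub : {z : (Fin d → ℝ) × ℝ | z.2 ≠ h z.1} ⊆ A0 ∪ B0 ∪ C0 := by
    intro z hz
    by_cases h1 : g z.1 = 0
    · exact Or.inl (Or.inl h1)
    · have hg1 : g z.1 = 1 := (hgval z.1).resolve_left h1
      by_cases h2 : z.2 = fstar z.1
      · exact Or.inr ⟨fun he => hz (h2.trans he), hg1⟩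
      · exact Or.inl (Or.inr h2)
  have hle : Qtest {z : (Fin d → ℝ) × ℝ | z.2 ≠ h z.1} ≤ Qtest A0 + Qtest B0 + Qtest C0 :=
    (measure_mono hsub).trans ((measure_union_le _ _).trans
      (add_le_add_left (measure_union_le _ _) _))
  have hfinsum : Qtest A0 + Qtest B0 + Qtest C0 ≠ ⊤ := by
    simp [ENNReal.add_ne_top, measure_ne_top]
  have htr : (Qtest {z : (Fin d → ℝ) × ℝ | z.2 ≠ h z.1}).toReal ≤
      (Qtest A0).toReal + (Qtest B0).toReal + (Qtest C0).toReal := by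
    calc (Qtest {z : (Fin d → ℝ) × ℝ | z.2 ≠ h z.1}).toReal ≤
        (Qtest A0 + Qtest B0 + Qtest C0).toReal := ENNReal.toReal_mono hfinsum hle
      _ = _ := by
        rw [ENNReal.toReal_add (ENNReal.add_ne_top.2 ⟨measure_ne_top _ _, measure_ne_top _ _⟩)
          (measure_ne_top _ _), ENNReal.toReal_add (measure_ne_top _ _) (measure_ne_top _ _)]
  -- identify test pieces with D'
  have hQA0 : Qtest A0 = D' {x | g x = 0} := by
    have hmg0 : MeasurableSet {x : Fin d → ℝ | g x = 0} := hg (measurableSet_singleton 0)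
    rw [← hQtestmarg, Measure.map_apply measurable_fst hmg0]
    rfl
  have hQC0 : Qtest C0 = D' T := by
    rw [← hQtestmarg, Measure.map_apply measurable_fst hTmeas]
    rfl
  rw [hQA0, hQC0] at htr
  have hfinal : (D' T).toReal ≤ 64 * K * et + 18 * K * εs := by
    have hI1le : I1 ≤ εs := hgap
    have hm1 : 2 * (K * I1) ≤ 2 * (K * εs) := by nlinarith
    have hm2 : 2 * (K * I2) ≤ 2 * (K * (32 * et + 8 * εs)) := by nlinarith
    nlinarith
  calc (Qtest {z : (Fin d → ℝ) × ℝ | z.2 ≠ h z.1}).toReal ≤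
      (D' {x | g x = 0}).toReal + (Qtest B0).toReal + (D' T).toReal := htr
    _ ≤ ρ + (Qtest B0).toReal + (64 * K * et + 18 * K * εs) :=
        add_le_add (add_le_add_left hrej _) hfinal
    _ = ρ + (Qtest B0).toReal + 64 * K * et + 18 * K * εs := by ring
end

section
/- Let d, k be positive integers, K > 0, and ε_s ≥ 0. Let D and D' be probability measures on ℝ^d such that every polynomial in d real variables of degree at most k is square-integrable with respect to D, and let g : ℝ^d → {0, 1} be measurable with ∫ p(x)² g(x) dD'(x) ≤ K · ∫ p(x)² dD(x) for every polynomial p of degree at most k, and with D'({x : g(x) = 1}) ≥ 1/2. Let f : ℝ^d → ℝ be measurable and suppose there exist polynomials p_low, p_up in d real variables of degree at most k with p_low(x) ≤ f(x) ≤ p_up(x) for all x ∈ ℝ^d and ∫ (p_up − p_low)² dD ≤ ε_s. Let D̃ be the conditional probability measure of D' on {x : g(x) = 1}. Then ∫ |f − p_low| dD̃ ≤ √(2 K ε_s). -/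
open MeasureTheory MvPolynomial

theorem stmt16 (d k : ℕ) (hd : 0 < d) (hk : 0 < k)
    (K εs : ℝ) (hK : 0 < K) (hεs : 0 ≤ εs)
    (D D' : Measure (Fin d → ℝ)) [IsProbabilityMeasure D] [IsProbabilityMeasure D']
    (hInt : ∀ p : MvPolynomial (Fin d) ℝ, p.totalDegree ≤ k →
      Integrable (fun x => (eval x p) ^ 2) D)
    (g : (Fin d → ℝ) → ℝ) (hg : Measurable g) (hgval : ∀ x, g x = 0 ∨ g x = 1)
    (hspec : ∀ p : MvPolynomial (Fin d) ℝ, p.totalDegree ≤ k →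
      (∫⁻ x, ENNReal.ofReal ((eval x p) ^ 2 * g x) ∂D') ≤
        ENNReal.ofReal (K * ∫ x, (eval x p) ^ 2 ∂D))
    (hmass : (1 : ℝ) / 2 ≤ (D' {x | g x = 1}).toReal)
    (f : (Fin d → ℝ) → ℝ) (hf : Measurable f)
    (plow pup : MvPolynomial (Fin d) ℝ)
    (hplowdeg : plow.totalDegree ≤ k) (hpupdeg : pup.totalDegree ≤ k)
    (hsand : ∀ x, eval x plow ≤ f x ∧ f x ≤ eval x pup)
    (hgap : (∫ x, (eval x pup - eval x plow) ^ 2 ∂D) ≤ εs) :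
    (∫ x, |f x - eval x plow| ∂(ProbabilityTheory.cond D' {x | g x = 1})) ≤
      Real.sqrt (2 * K * εs) := by
  classical
  set s : Set (Fin d → ℝ) := {x | g x = 1} with hs_def
  have hsm : MeasurableSet s := hg (measurableSet_singleton 1)
  have hc0 : D' s ≠ 0 := by
    intro h
    rw [hs_def] at hmass
    rw [h] at hmass
    simp at hmass
    linarith
  have hcne : D' s ≠ ⊤ := measure_ne_top _ _
  have hprob : IsProbabilityMeasure (ProbabilityTheory.cond D' s) :=
    ProbabilityTheory.cond_isProbabilityMeasure hc0
  set μ := ProbabilityTheory.cond D' s with hμ_def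
  set q : (Fin d → ℝ) → ℝ := fun x => eval x pup - eval x plow with hq_def
  have hqm : Measurable q :=
    ((MvPolynomial.continuous_eval pup).measurable).sub
      ((MvPolynomial.continuous_eval plow).measurable)
  have hq_nonneg : ∀ x, 0 ≤ q x := fun x => by
    have := hsand x; simp only [hq_def]; linarith [this.1, this.2]
  have hdeg : (pup - plow).totalDegree ≤ k :=
    le_trans (MvPolynomial.totalDegree_sub _ _) (max_le hpupdeg hplowdeg)
  have hq_eval : ∀ x, eval x (pup - plow) = q x := fun x => by
    simp [hq_def, map_sub]
  -- Key lintegral bound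
  have h1 : ∫⁻ x in s, ENNReal.ofReal (q x ^ 2) ∂D'
      = ∫⁻ x, ENNReal.ofReal ((eval x (pup - plow)) ^ 2 * g x) ∂D' := by
    rw [← lintegral_indicator hsm]
    congr 1
    funext x
    by_cases hx : x ∈ s
    · have hgx : g x = 1 := hx
      rw [Set.indicator_of_mem hx, hq_eval, hgx, mul_one]
    · have hgx : g x = 0 := (hgval x).resolve_right hx
      rw [Set.indicator_of_notMem hx, hgx, mul_zero, ENNReal.ofReal_zero]
  have h2 : ∫⁻ x in s, ENNReal.ofReal (q x ^ 2) ∂D' ≤ ENNReal.ofReal (K * εs) := by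
    rw [h1]
    refine (hspec _ hdeg).trans (ENNReal.ofReal_le_ofReal ?_)
    have heq : (∫ x, (eval x (pup - plow)) ^ 2 ∂D) = ∫ x, (eval x pup - eval x plow) ^ 2 ∂D := by
      congr 1; funext x; rw [map_sub]
    rw [heq]
    exact mul_le_mul_of_nonneg_left hgap hK.le
  have hhalf : ENNReal.ofReal (1 / 2) ≤ D' s := by
    conv_rhs => rw [← ENNReal.ofReal_toReal hcne]
    exact ENNReal.ofReal_le_ofReal hmass
  have hinv : (D' s)⁻¹ ≤ 2 := by
    have h12 : ENNReal.ofReal (1 / 2) = 2⁻¹ := by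
      rw [show (1 : ℝ) / 2 = (2 : ℝ)⁻¹ by norm_num,
        ENNReal.ofReal_inv_of_pos (by norm_num)]
      norm_num
    calc (D' s)⁻¹ ≤ (ENNReal.ofReal (1 / 2))⁻¹ := ENNReal.inv_le_inv' hhalf
      _ = 2 := by rw [h12, inv_inv]
  have key : ∫⁻ x, ENNReal.ofReal (q x ^ 2) ∂μ ≤ ENNReal.ofReal (2 * (K * εs)) := by
    rw [hμ_def, ProbabilityTheory.cond, lintegral_smul_measure]
    calc (D' s)⁻¹ * ∫⁻ x in s, ENNReal.ofReal (q x ^ 2) ∂D'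
        ≤ 2 * ENNReal.ofReal (K * εs) := by
          exact mul_le_mul' hinv h2
      _ = ENNReal.ofReal (2 * (K * εs)) := by
          rw [ENNReal.ofReal_mul (by norm_num : (0:ℝ) ≤ 2), ENNReal.ofReal_ofNat]
  have hqsq_int : Integrable (fun x => q x ^ 2) μ := by
    refine ⟨(hqm.pow_const 2).aestronglyMeasurable, ?_⟩
    rw [hasFiniteIntegral_iff_ofReal (ae_of_all _ fun x => sq_nonneg (q x))]
    exact lt_of_le_of_lt key ENNReal.ofReal_lt_top
  have hIsq : ∫ x, q x ^ 2 ∂μ ≤ 2 * K * εs := by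
    rw [integral_eq_lintegral_of_nonneg_ae (ae_of_all _ fun x => sq_nonneg (q x))
      (hqm.pow_const 2).aestronglyMeasurable]
    calc (∫⁻ x, ENNReal.ofReal (q x ^ 2) ∂μ).toReal
        ≤ (ENNReal.ofReal (2 * (K * εs))).toReal :=
          ENNReal.toReal_mono ENNReal.ofReal_ne_top key
      _ = 2 * (K * εs) := ENNReal.toReal_ofReal (by positivity)
      _ = 2 * K * εs := by ring
  have hqL2 : MemLp q 2 μ := (memLp_two_iff_integrable_sq hqm.aestronglyMeasurable).2 hqsq_int
  have hqint : Integrable q μ := hqL2.integrable (by norm_num)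
  have hIq_nonneg : 0 ≤ ∫ x, q x ∂μ := integral_nonneg hq_nonneg
  have hvar : (∫ x, q x ∂μ) ^ 2 ≤ ∫ x, q x ^ 2 ∂μ := by
    have h := ProbabilityTheory.variance_nonneg q μ
    rw [ProbabilityTheory.variance_eq_sub hqL2] at h
    have : (∫ x, (q ^ 2) x ∂μ) = ∫ x, q x ^ 2 ∂μ := by
      congr 1
    nlinarith [h]
  have habs_le : ∀ x, |f x - eval x plow| ≤ q x := fun x => by
    have h := hsand x
    rw [abs_of_nonneg (by linarith [h.1])]
    simp only [hq_def]; linarith [h.2]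
  have hint_abs : Integrable (fun x => |f x - eval x plow|) μ := by
    refine hqint.mono ((hf.sub (MvPolynomial.continuous_eval plow).measurable).abs.aestronglyMeasurable)
      (ae_of_all _ fun x => ?_)
    rw [Real.norm_eq_abs, Real.norm_eq_abs, abs_abs, abs_of_nonneg (hq_nonneg x)]
    exact habs_le x
  calc ∫ x, |f x - eval x plow| ∂μ ≤ ∫ x, q x ∂μ :=
        integral_mono hint_abs hqint habs_le
    _ = Real.sqrt ((∫ x, q x ∂μ) ^ 2) := (Real.sqrt_sq hIq_nonneg).symm
    _ ≤ Real.sqrt (∫ x, q x ^ 2 ∂μ) := Real.sqrt_le_sqrt hvar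
    _ ≤ Real.sqrt (2 * K * εs) := Real.sqrt_le_sqrt hIsq
end
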